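/- arXiv:2507.02589 — 7 statements merged into one kernel-verified Lean document; each statement's English description precedes it below -/
import Mathlib

section
/- Let D ≥ 1 and let V be an affine sub-lattice of ℤ^D of rank k. Then there exists a subset I = {i₁ < ... < i_k} ⊆ {1,...,D} such that for every non-zero Laurent polynomial P in k+1 variables over ℚ, there is a finite union of affine sub-lattices of V each of rank < k whose complement in V contains no point c with P(A, A^{c_{i₁}}, ..., A^{c_{i_k}}) = 0 (as a Laurent polynomial in A). -/
open scoped BigOperators

/-- `S` is an affine sub-lattice of `ℤ^D` of rank `k`: a coset `v + L` of a subgroup `L`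
of `ℤ^D` whose rank (as a `ℤ`-module) is `k`. -/
def IsAffineSublatticeOfRank (D k : ℕ) (S : Set (Fin D → ℤ)) : Prop :=
  ∃ (v : Fin D → ℤ) (L : AddSubgroup (Fin D → ℤ)),
    Module.finrank ℤ (AddSubgroup.toIntSubmodule L) = k ∧
    S = (fun x => v + x) '' (L : Set (Fin D → ℤ))

/-- Substitution of `X_j = A^{n_j}` in a Laurent polynomial `P` in `k+1` variables
(the variable indexed by `0` being `A` itself), producing a Laurent polynomial in `A`. -/
noncomputable def laurentSubst {k : ℕ} (P : AddMonoidAlgebra ℚ (Fin (k + 1) → ℤ))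
    (n : Fin k → ℤ) : AddMonoidAlgebra ℚ ℤ :=
  AddMonoidAlgebra.mapDomain (fun m => m 0 + ∑ j : Fin k, m j.succ * n j) P

/-!
Write `V = v + L`. Since `L` has rank `k`, some `k × k` minor of a basis matrix of `L` is
nonzero; its columns `ι` make every nonzero form `x ↦ ∑ aⱼ x_{ι j}` nonvanishing on `L`.
The substitution sends the monomial with exponent `m` to `A ^ (m 0 + ∑ m_{j+1} c_{ι j})`, so it
can only kill `P` if two distinct exponents `m₁, m₂` of `P` collide. With `d = m₁ - m₂` the
tail of `d` is nonzero (otherwise `d = 0`), so `c` lies on the affine hyperplane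
`d 0 + ∑ d_{j+1} c_{ι j} = 0`, which meets `V` in a coset of `L ∩ ker`, of rank `< k`.
-/

open Module Submodule

lemma Submodule.finrank_inf_ker_lt {R N : Type*} [CommRing R] [IsDomain R] [AddCommGroup N]
    [Module R N] {M : Submodule R N} [Module.Finite R M] {F : N →ₗ[R] R} {x : N}
    (hxM : x ∈ M) (hx : F x ≠ 0) :
    finrank R ↥(M ⊓ LinearMap.ker F) < finrank R M := by
  set f := F ∘ₗ M.subtype
  have hker : LinearMap.ker f = comap M.subtype (M ⊓ LinearMap.ker F) := by
    rw [comap_inf, comap_subtype_self, top_inf_eq]; rfl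
  have hrange : 0 < finrank R (LinearMap.range f) :=
    finrank_pos_iff_exists_ne_zero.mpr ⟨⟨f ⟨x, hxM⟩, ⟨x, hxM⟩, rfl⟩, by simpa [f] using hx⟩
  have := (LinearMap.ker f).finrank_quotient_add_finrank
  rw [f.quotKerEquivRange.finrank_eq, hker,
    (comapSubtypeEquivOfLe (inf_le_left : M ⊓ LinearMap.ker F ≤ M)).finrank_eq] at this
  omega

lemma exists_strictMono_linearIndependent_comp {K V : Type*} [DivisionRing K] [AddCommGroup V]
    [Module K V] {D k : ℕ} (v : Fin D → V) (hk : finrank K (span K (Set.range v)) = k) :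
    ∃ ι : Fin k → Fin D, StrictMono ι ∧ LinearIndependent K (v ∘ ι) := by
  classical
  obtain ⟨κ, a, ha, hspan, hli⟩ := exists_linearIndependent' K v
  have : Fintype κ := Fintype.ofInjective a ha
  have hcard : (Finset.univ.image a).card = k := by
    rw [Finset.card_image_of_injective _ ha, Finset.card_univ, ← finrank_span_eq_card hli, hspan, hk]
  set ι := (Finset.univ.image a).orderEmbOfFin hcard
  have hι : ∀ j, ∃ i, a i = ι j := fun j => by
    obtain ⟨i, -, hi⟩ := Finset.mem_image.mp ((Finset.univ.image a).orderEmbOfFin_mem hcard j)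
    exact ⟨i, hi⟩
  choose g hg using hι
  have hvι : v ∘ ι = (v ∘ a) ∘ g := funext fun j => by simp [hg]
  refine ⟨ι, ι.strictMono, hvι ▸ hli.comp g fun j j' h => ι.injective ?_⟩
  rw [← hg, ← hg, h]

def coordForm {R : Type*} [CommSemiring R] {D k : ℕ} (ι : Fin k → Fin D) (a : Fin k → R) :
    (Fin D → R) →ₗ[R] R :=
  ∑ j, a j • LinearMap.proj (ι j)

@[simp] lemma coordForm_apply {R : Type*} [CommSemiring R] {D k : ℕ} (ι : Fin k → Fin D)
    (a : Fin k → R) (c : Fin D → R) : coordForm ι a c = ∑ j, a j * c (ι j) := by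
  simp [coordForm]

lemma exists_strictMono_coordForm_ne_zero {D k : ℕ} (M : Submodule ℤ (Fin D → ℤ))
    (hM : finrank ℤ M = k) :
    ∃ ι : Fin k → Fin D, StrictMono ι ∧ ∀ a ≠ 0, ∃ x ∈ M, coordForm ι a x ≠ 0 := by
  let b := (finBasis ℤ M).reindex (finCongr hM)
  let cast : (Fin D → ℤ) →ₗ[ℤ] (Fin D → ℚ) := (Int.castAddHom ℚ).toIntLinearMap.compLeft (Fin D)
  have hcast : LinearMap.ker cast = ⊥ :=
    LinearMap.ker_eq_bot.mpr fun x y h => funext fun i => by simpa [cast] using congrFun h i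
  let B : Matrix (Fin k) (Fin D) ℚ := Matrix.of fun s => cast (b s)
  have hrows : LinearIndependent ℚ B.row :=
    (LinearIndependent.iff_fractionRing ℤ ℚ).mp
      ((b.linearIndependent.map' M.subtype M.ker_subtype).map' cast hcast)
  have hrank : finrank ℚ (span ℚ (Set.range B.col)) = k := by
    rw [← Matrix.rank_eq_finrank_span_cols, hrows.rank_matrix, Fintype.card_fin]
  obtain ⟨ι, hι, hli⟩ := exists_strictMono_linearIndependent_comp B.col hrank
  refine ⟨ι, hι, fun a ha => ?_⟩
  by_contra! h
  have hsum : ∑ j, (a j : ℚ) • B.col (ι j) = 0 := funext fun s => by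
    simpa [B, cast] using congrArg (Int.cast : ℤ → ℚ) (h (b s) (b s).2)
  exact ha (funext fun j => by exact_mod_cast Fintype.linearIndependent_iff.mp hli _ hsum j)

lemma exists_rank_lt_isAffineSublatticeOfRank_fiber {D k : ℕ} {v : Fin D → ℤ}
    {L : AddSubgroup (Fin D → ℤ)} (hL : finrank ℤ L.toIntSubmodule = k)
    {F : (Fin D → ℤ) →ₗ[ℤ] ℤ} {x : Fin D → ℤ} (hxL : x ∈ L) (hx : F x ≠ 0) {b : ℤ}
    (hne : {c | c ∈ (fun y => v + y) '' (L : Set (Fin D → ℤ)) ∧ F c = b}.Nonempty) :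
    ∃ r < k, IsAffineSublatticeOfRank D r
      {c | c ∈ (fun y => v + y) '' (L : Set (Fin D → ℤ)) ∧ F c = b} := by
  obtain ⟨c₀, hc₀, rfl⟩ := hne
  rw [Set.image_add_left] at hc₀ ⊢
  refine ⟨_, hL ▸ finrank_inf_ker_lt (M := L.toIntSubmodule) hxL hx, c₀,
    (L.toIntSubmodule ⊓ LinearMap.ker F).toAddSubgroup, rfl, ?_⟩
  ext c
  rw [Set.image_add_left]
  simp only [Set.mem_ofPred_eq, Set.mem_preimage, SetLike.mem_coe, mem_toAddSubgroup, mem_inf,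
    LinearMap.mem_ker, map_add, map_neg, neg_add_eq_zero, eq_comm (a := F c₀)]
  have hdiff : -c₀ + c = -(-v + c₀) + (-v + c) := by abel
  have hdiff' : -v + c = (-v + c₀) + (-c₀ + c) := by abel
  constructor
  · rintro ⟨hc, hF⟩
    exact ⟨hdiff ▸ L.add_mem (L.neg_mem hc₀) hc, hF⟩
  · rintro ⟨hc, hF⟩
    exact ⟨hdiff' ▸ L.add_mem hc₀ hc, hF⟩

-- `laurentSubst P n` is `AddMonoidAlgebra.mapDomain (substExponent n) P` by definition.
def substExponent {k : ℕ} (n : Fin k → ℤ) : (Fin (k + 1) → ℤ) →+ ℤ where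
  toFun m := m 0 + ∑ j : Fin k, m j.succ * n j
  map_zero' := by simp
  map_add' m m' := by simp only [Pi.add_apply, add_mul, Finset.sum_add_distrib]; ring

lemma substExponent_apply_eq_zero_iff {D k : ℕ} (ι : Fin k → Fin D) (c : Fin D → ℤ)
    (d : Fin (k + 1) → ℤ) :
    substExponent (fun j => c (ι j)) d = 0 ↔ coordForm ι (Fin.tail d) c = -d 0 := by
  simp [substExponent, Fin.tail, add_eq_zero_iff_eq_neg']

lemma eq_zero_of_substExponent_eq_zero {k : ℕ} {n : Fin k → ℤ} {d : Fin (k + 1) → ℤ}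
    (hd : substExponent n d = 0) (htail : Fin.tail d = 0) : d = 0 := by
  have hsucc : ∀ j : Fin k, d j.succ = 0 := fun j => congrFun htail j
  have h0 : d 0 = 0 := by simpa [substExponent, hsucc] using hd
  exact funext fun i => Fin.cases h0 (congrFun htail) i

lemma laurentSubst_ne_zero_of_injOn {k : ℕ} {P : AddMonoidAlgebra ℚ (Fin (k + 1) → ℤ)}
    (hP : P ≠ 0) {n : Fin k → ℤ} (h : Set.InjOn (substExponent n) P.coeff.support) :
    laurentSubst P n ≠ 0 := fun h0 =>
  hP <| AddMonoidAlgebra.coeff_eq_zero.mp <|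
    Finsupp.mapDomain_injOn _ h (Set.Subset.refl _) (by simp)
      ((congrArg AddMonoidAlgebra.coeff h0).trans Finsupp.mapDomain_zero.symm)

theorem stmt0_general (D k : ℕ)
    (V : Set (Fin D → ℤ)) (hV : IsAffineSublatticeOfRank D k V) :
    ∃ ι : Fin k → Fin D, StrictMono ι ∧
      ∀ P : AddMonoidAlgebra ℚ (Fin (k + 1) → ℤ), P ≠ 0 →
        ∃ (m : ℕ) (Wfam : Fin m → Set (Fin D → ℤ)),
          (∀ t, Wfam t ⊆ V ∧ ∃ r, r < k ∧ IsAffineSublatticeOfRank D r (Wfam t)) ∧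
          ∀ c ∈ V, (∀ t, c ∉ Wfam t) →
            laurentSubst P (fun j => c (ι j)) ≠ 0 := by
  classical
  obtain ⟨v, L, hL, rfl⟩ := hV
  obtain ⟨ι, hι, hform⟩ := exists_strictMono_coordForm_ne_zero L.toIntSubmodule hL
  refine ⟨ι, hι, fun P hP => ?_⟩
  let H : (Fin (k + 1) → ℤ) → Set (Fin D → ℤ) := fun d =>
    {c | c ∈ (fun x => v + x) '' (L : Set (Fin D → ℤ)) ∧ coordForm ι (Fin.tail d) c = -d 0}
  let T := ((P.coeff.support ×ˢ P.coeff.support).image fun m => m.1 - m.2).filter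
    fun d => Fin.tail d ≠ 0 ∧ (H d).Nonempty
  refine ⟨T.card, fun t => H (T.equivFin.symm t), fun t => ⟨fun c hc => hc.1, ?_⟩,
    fun c hc hcH => laurentSubst_ne_zero_of_injOn hP fun m₁ hm₁ m₂ hm₂ he => ?_⟩
  · obtain ⟨htail, hne⟩ := (Finset.mem_filter.mp (T.equivFin.symm t).2).2
    obtain ⟨x, hxL, hx⟩ := hform _ htail
    exact exists_rank_lt_isAffineSublatticeOfRank_fiber hL hxL hx hne
  · by_contra hne
    have hd : substExponent (fun j => c (ι j)) (m₁ - m₂) = 0 := by rw [map_sub, he, sub_self]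
    have hcd : c ∈ H (m₁ - m₂) := ⟨hc, (substExponent_apply_eq_zero_iff ι c _).mp hd⟩
    have htail : Fin.tail (m₁ - m₂) ≠ 0 := fun h =>
      hne (sub_eq_zero.mp (eq_zero_of_substExponent_eq_zero hd h))
    have hT : m₁ - m₂ ∈ T := Finset.mem_filter.mpr
      ⟨Finset.mem_image.mpr ⟨(m₁, m₂), Finset.mem_product.mpr ⟨hm₁, hm₂⟩, rfl⟩, htail, c, hcd⟩
    exact hcH (T.equivFin ⟨_, hT⟩) (by simpa using hcd)

theorem stmt0 (D k : ℕ) (hD : 1 ≤ D) (hkD : k ≤ D)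
    (V : Set (Fin D → ℤ)) (hV : IsAffineSublatticeOfRank D k V) :
    ∃ ι : Fin k → Fin D, StrictMono ι ∧
      ∀ P : AddMonoidAlgebra ℚ (Fin (k + 1) → ℤ), P ≠ 0 →
        ∃ (m : ℕ) (Wfam : Fin m → Set (Fin D → ℤ)),
          (∀ t, Wfam t ⊆ V ∧ ∃ r, r < k ∧ IsAffineSublatticeOfRank D r (Wfam t)) ∧
          ∀ c ∈ V, (∀ t, c ∉ Wfam t) →
            laurentSubst P (fun j => c (ι j)) ≠ 0 :=
  stmt0_general D k V hV
end

section
/- Let v₁,...,vₙ be a basis of ℚⁿ and let V ⊆ ℚⁿ be a subspace of dimension d < n. Then there exists a subset J ⊆ {1,...,n} such that: (1) W = span{v_j : j ∈ J} is in direct sum with V; (2) for every l ∈ {1,...,n} \ J, the subspace D_l = V ∩ span{v_j : j ∈ J ∪ {l}} has dimension 1; and (3) V is the direct sum of the D_l over l ∈ {1,...,n} \ J. -/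
/-!
Choose `J` so that `W = span {v j | j ∈ J}` is a complement of `V`, and let `π` be the projection
onto `V` along `W`. For every `x`, `V ⊓ (K ∙ x ⊔ W)` is the line through `π x`, so
`D_l = V ⊓ span {v j | j ∈ insert l J}` is the line through `π (v l)`. As `ker π = W`, the vectors
`π (v l)` with `l ∉ J` are linearly independent, and they span `π(⊤) = V`.
-/

open Set Submodule

section

variable {R K M ι : Type*} [AddCommGroup M]

theorem Submodule.exists_isCompl_span_image [DivisionRing K] [Module K M] {v : ι → M}
    (hspan : span K (range v) = ⊤) (V : Submodule K M) :
    ∃ J : Set ι, IsCompl V (span K (v '' J)) := by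
  -- `J` is maximal such that the images of `v j`, `j ∈ J`, in `M ⧸ V` are linearly independent.
  obtain ⟨J, -, -, hJspan, hJind⟩ :=
    exists_linearIndepOn_extension (v := V.mkQ ∘ v) (linearIndepOn_empty K _) (subset_univ _)
  refine ⟨J, ?_, ?_⟩
  · have hdisj := range_ker_disjoint (v := v ∘ Subtype.val) (f := V.mkQ) hJind
    rwa [range_comp, Subtype.range_coe, ker_mkQ, disjoint_comm] at hdisj
  · rw [codisjoint_iff, ← map_mkQ_eq_top, map_span, ← image_comp, eq_top_iff]
    calc ⊤ = map V.mkQ (span K (range v)) := by rw [hspan, Submodule.map_top, range_mkQ]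
      _ = span K (range (V.mkQ ∘ v)) := by rw [map_span, range_comp]
      _ ≤ span K (V.mkQ ∘ v '' J) := span_le.2 (image_univ ▸ hJspan)

variable [Ring R] [Module R M] {V W : Submodule R M}

theorem Submodule.inf_span_singleton_sup_eq_span_projection (h : IsCompl V W) (x : M) :
    V ⊓ (R ∙ x ⊔ W) = R ∙ V.projection W h x := by
  apply le_antisymm
  · rintro y ⟨hyV, hy⟩
    obtain ⟨_, hxy, w, hw, rfl⟩ := mem_sup.1 hy
    obtain ⟨c, rfl⟩ := mem_span_singleton.1 hxy
    rw [← projection_apply_of_mem_left h hyV, map_add, map_smul,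
      (projection_apply_eq_zero_iff h).2 hw, add_zero]
    exact smul_mem _ _ (mem_span_singleton_self _)
  · rw [span_singleton_le_iff_mem]
    refine ⟨projection_apply_mem h x, ?_⟩
    rw [← sub_sub_cancel x (V.projection W h x)]
    exact sub_mem (mem_sup_left (mem_span_singleton_self x))
      (mem_sup_right (sub_projection_mem h x))

theorem Submodule.inf_span_image_insert_eq_span_projection {v : ι → M} {J : Set ι}
    (h : IsCompl V (span R (v '' J))) (l : ι) :
    V ⊓ span R (v '' insert l J) = R ∙ V.projection _ h (v l) := by
  rw [image_insert_eq, span_insert, inf_span_singleton_sup_eq_span_projection]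

theorem LinearIndependent.projection_comp_compl {v : ι → M} (hv : LinearIndependent R v)
    {J : Set ι} (h : IsCompl V (span R (v '' J))) :
    LinearIndependent R fun l : {l // l ∉ J} ↦ V.projection _ h (v l) := by
  refine (hv.comp Subtype.val Subtype.val_injective).map (f := V.projection _ h) ?_
  rw [ker_projection, range_comp, Subtype.range_coe_subtype]
  exact hv.disjoint_span_image disjoint_compl_left

theorem Submodule.iSup_span_singleton_projection_compl {v : ι → M}
    (hspan : span R (range v) = ⊤) {J : Set ι} (h : IsCompl V (span R (v '' J))) :
    ⨆ l : {l // l ∉ J}, R ∙ V.projection _ h (v l) = V := by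
  rw [← span_range_eq_iSup]
  refine le_antisymm (span_le.2 ?_) ?_
  · rintro _ ⟨l, rfl⟩
    exact projection_apply_mem h _
  · conv_lhs => rw [← range_projection h, LinearMap.range_eq_map, ← hspan, map_span]
    refine span_le.2 ?_
    rintro _ ⟨_, ⟨i, rfl⟩, rfl⟩
    by_cases hi : i ∈ J
    · rw [(projection_apply_eq_zero_iff h).2 (subset_span (mem_image_of_mem v hi))]
      exact zero_mem _
    · exact subset_span ⟨⟨i, hi⟩, rfl⟩

end

theorem stmt1_general (n : ℕ)
    (v : Fin n → (Fin n → ℚ))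
    (hv : LinearIndependent ℚ v)
    (hspan : Submodule.span ℚ (Set.range v) = ⊤)
    (V : Submodule ℚ (Fin n → ℚ)) :
    ∃ J : Finset (Fin n),
      (Submodule.span ℚ (v '' (J : Set (Fin n))) ⊓ V = ⊥) ∧
      (∀ l ∉ J,
        Module.finrank ℚ
          (V ⊓ Submodule.span ℚ (v '' (insert l (J : Set (Fin n)))) : Submodule ℚ (Fin n → ℚ)) = 1) ∧
      iSupIndep (fun l : {l : Fin n // l ∉ J} =>
        V ⊓ Submodule.span ℚ (v '' (insert l.1 (J : Set (Fin n))))) ∧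
      (⨆ l : {l : Fin n // l ∉ J},
        V ⊓ Submodule.span ℚ (v '' (insert l.1 (J : Set (Fin n))))) = V := by
  obtain ⟨J, hJ⟩ := exists_isCompl_span_image hspan V
  obtain ⟨J, rfl⟩ := J.toFinite.exists_finset_coe
  have hD := inf_span_image_insert_eq_span_projection hJ
  have hind := hv.projection_comp_compl hJ
  refine ⟨J, hJ.disjoint.symm.eq_bot, fun l hl ↦ ?_, ?_, ?_⟩
  · rw [hD]
    exact finrank_span_singleton (hind.ne_zero ⟨l, hl⟩)
  · have hindep := hind.iSupIndep_span_singleton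
    simp only [← hD] at hindep
    exact hindep
  · have hsup := iSup_span_singleton_projection_compl hspan hJ
    simp only [← hD] at hsup
    exact hsup

theorem stmt1 (n d : ℕ) (hd : d < n)
    (v : Fin n → (Fin n → ℚ))
    (hv : LinearIndependent ℚ v)
    (hspan : Submodule.span ℚ (Set.range v) = ⊤)
    (V : Submodule ℚ (Fin n → ℚ)) (hV : Module.finrank ℚ V = d) :
    ∃ J : Finset (Fin n),
      (Submodule.span ℚ (v '' (J : Set (Fin n))) ⊓ V = ⊥) ∧
      (∀ l ∉ J,
        Module.finrank ℚ
          (V ⊓ Submodule.span ℚ (v '' (insert l (J : Set (Fin n)))) : Submodule ℚ (Fin n → ℚ)) = 1) ∧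
      iSupIndep (fun l : {l : Fin n // l ∉ J} =>
        V ⊓ Submodule.span ℚ (v '' (insert l.1 (J : Set (Fin n))))) ∧
      (⨆ l : {l : Fin n // l ∉ J},
        V ⊓ Submodule.span ℚ (v '' (insert l.1 (J : Set (Fin n))))) = V :=
  stmt1_general n v hv hspan V
end

section
/- Let n, d ≥ 1 be integers, let e₁,...,eₙ be a basis of ℤⁿ, and let V = ⋂_{i∈I} {x ∈ ℚⁿ : φᵢ(x) ≥ aᵢ} for a finite family of linear forms φᵢ : ℚⁿ → ℚ and constants aᵢ ∈ ℚ. Let W be a ℤ-module and f : ℤⁿ → W a function such that for all x in ℤⁿ ∩ int(V), all l ∈ {1,...,n}, and all ε ∈ {±1}: if x + kε·e_l ∈ int(V) for all k ∈ {1,...,d}, then f(x) lies in the ℤ-span of {f(x + kε·e_l) : 1 ≤ k ≤ d}. Then there exists a finite collection (V_j)_{j∈J} of proper affine subspaces of ℚⁿ such that the ℤ-span of {f(x) : x ∈ ℤⁿ ∩ (int(V) \ ⋃_j V_j)} is generated by at most dⁿ elements. -/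
/-!
Induct on the dimension, eliminating the first coordinate. The fibre of `P = {x | ∀ i, a i < φ i x}`
over a point of `ℚᵐ` is an open interval, whose end points become affine in that point once the
faces are rescaled so that their first coefficients lie in `{0, 1, -1}`. The recurrence in the
first direction shows that the values of `f` on the lattice points of a fibre are spanned by those on any `d` consecutive lattice
points of the fibre (a window). Fourier–Motzkin elimination yields a polyhedron `Q ⊆ ℚᵐ` over which
the fibres above `b` and above all neighbours `b + o`, `‖o‖∞ ≤ d`, contain a common window.
The window values of `f` over `b`, a `d`-fold vector, then satisfy the recurrence on `Q` in the
remaining directions, and induction applies to them.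

A lattice point of `P` whose distance to every face exceeds a fixed margin lies above `Q`. On
lattice points a face takes values in `q⁻¹ ℤ` for some `q`, so the remaining lattice points of `P`
lie on finitely many hyperplanes parallel to the faces; these are the removed affine subspaces.
A general lattice basis is reduced to the standard one by a change of coordinates.
-/

open Set

namespace LatticeRecurrence

variable {m : ℕ}

def toRat (x : Fin m → ℤ) : Fin m → ℚ := fun i => x i

@[simp] lemma toRat_apply (x : Fin m → ℤ) (i : Fin m) : toRat x i = x i := rfl

lemma toRat_add (x y : Fin m → ℤ) : toRat (x + y) = toRat x + toRat y := by
  ext; simp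

lemma toRat_cons (t : ℤ) (b : Fin m → ℤ) :
    toRat (Fin.cons t b : Fin (m + 1) → ℤ) = Fin.cons (t : ℚ) (toRat b) := by
  ext i; cases i using Fin.cases <;> simp

lemma toRat_single (l : Fin m) : toRat (Pi.single l 1) = Pi.single l 1 := by
  ext j
  by_cases h : j = l <;> simp [h]

def openPolyhedron {I : Type*} (φ : I → (Fin m → ℚ) →ₗ[ℚ] ℚ) (a : I → ℚ) : Set (Fin m → ℚ) :=
  {x | ∀ i, a i < φ i x}

lemma isOpen_openPolyhedron {I : Type*} [Finite I] (φ : I → (Fin m → ℚ) →ₗ[ℚ] ℚ) (a : I → ℚ) :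
    IsOpen (openPolyhedron φ a) := by
  simp only [openPolyhedron, ofPred_forall]
  exact isOpen_iInter_of_finite fun i => isOpen_lt continuous_const (φ i).continuous_on_pi

def IsProperAffine (K : Type*) {E : Type*} [Ring K] [AddCommGroup E] [Module K E] (A : Set E) :
    Prop :=
  ∃ (p : Submodule K E) (v : E), p ≠ ⊤ ∧ A = (fun y => v + y) '' p

lemma IsProperAffine.preimage {K E F : Type*} [Ring K] [AddCommGroup E] [Module K E]
    [AddCommGroup F] [Module K F] {A : Set F} (hA : IsProperAffine K A) (L : E →ₗ[K] F)
    (hL : Function.Surjective L) : IsProperAffine K (L ⁻¹' A) := by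
  obtain ⟨p, v, hp, rfl⟩ := hA
  obtain ⟨u, rfl⟩ := hL v
  refine ⟨p.comap L, u, fun h => hp ?_, ?_⟩
  · rw [← Submodule.map_comap_eq_of_surjective hL p, h, Submodule.map_top,
      LinearMap.range_eq_top.2 hL]
  · ext y
    simp [neg_add_eq_sub]

lemma isProperAffine_hyperplane {K E : Type*} [Field K] [AddCommGroup E] [Module K E]
    {χ : E →ₗ[K] K} (hχ : χ ≠ 0) (c : K) : IsProperAffine K (χ ⁻¹' {c}) :=
  IsProperAffine.preimage ⟨⊥, c, bot_ne_top, by simp⟩ χ (LinearMap.surjective_of_ne_zero hχ)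

lemma exists_mul_den_eq_int (χ : (Fin m → ℚ) →ₗ[ℚ] ℚ) :
    ∃ q : ℕ, 0 < q ∧ ∀ x : Fin m → ℤ, ∃ z : ℤ, χ (toRat x) * q = z := by
  set q := ∏ l, (χ (Pi.single l 1)).den
  have hq : ∀ l, ∃ z : ℤ, χ (Pi.single l 1) * q = z := fun l => by
    obtain ⟨c, hc⟩ := Finset.dvd_prod_of_mem (fun l => (χ (Pi.single l 1)).den)
      (Finset.mem_univ l)
    have hc' : (q : ℚ) = (χ (Pi.single l 1)).den * c := by exact_mod_cast hc
    refine ⟨(χ (Pi.single l 1)).num * c, ?_⟩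
    rw [hc', ← mul_assoc, Rat.mul_den_eq_num]
    push_cast
    rfl
  choose z hz using hq
  refine ⟨q, Finset.prod_pos fun l _ => Rat.den_pos _, fun x => ⟨∑ l, x l * z l, ?_⟩⟩
  have hx : toRat x = ∑ l, (x l : ℚ) • Pi.single l 1 := by
    ext j
    simp [Pi.single_apply]
  rw [hx, map_sum, Finset.sum_mul]
  push_cast
  refine Finset.sum_congr rfl fun l _ => ?_
  rw [map_smul, smul_eq_mul, mul_assoc, hz]

lemma finite_range_inter_Icc (χ : (Fin m → ℚ) →ₗ[ℚ] ℚ) (lo hi : ℚ) :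
    (range (fun x => χ (toRat x)) ∩ Icc lo hi).Finite := by
  obtain ⟨q, hq, hz⟩ := exists_mul_den_eq_int χ
  have hq' : (0 : ℚ) < q := by exact_mod_cast hq
  refine ((finite_Icc ⌈lo * q⌉ ⌊hi * q⌋).image fun z : ℤ => (z : ℚ) / q).subset ?_
  rintro _ ⟨⟨x, rfl⟩, h₁, h₂⟩
  obtain ⟨z, hz⟩ := hz x
  refine ⟨z, ⟨Int.ceil_le.2 ?_, Int.le_floor.2 ?_⟩, ?_⟩
  · rw [← hz]
    exact mul_le_mul_of_nonneg_right h₁ hq'.le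
  · rw [← hz]
    exact mul_le_mul_of_nonneg_right h₂ hq'.le
  · show (z : ℚ) / q = χ (toRat x)
    rw [← hz]
    field_simp

lemma exists_finite_properAffine_add_lt {I : Type*} [Finite I] (φ : I → (Fin m → ℚ) →ₗ[ℚ] ℚ)
    (a : I → ℚ) (Λ : ℚ) :
    ∃ 𝒜 : Set (Set (Fin m → ℚ)), 𝒜.Finite ∧ (∀ A ∈ 𝒜, IsProperAffine ℚ A) ∧
      ∀ x, toRat x ∈ openPolyhedron φ a → (∀ A ∈ 𝒜, toRat x ∉ A) →
        ∀ i, φ i ≠ 0 → a i + Λ < φ i (toRat x) := by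
  refine ⟨⋃ (i) (_ : φ i ≠ 0), (fun c => φ i ⁻¹' {c}) ''
    (range (fun x => φ i (toRat x)) ∩ Icc (a i) (a i + Λ)),
    finite_iUnion fun i => finite_iUnion fun _ => (finite_range_inter_Icc _ _ _).image _, ?_, ?_⟩
  · simp only [mem_iUnion, mem_image]
    rintro _ ⟨i, hi, c, -, rfl⟩
    exact isProperAffine_hyperplane hi c
  · intro x hx hoff i hi
    by_contra! hle
    exact hoff _ (mem_iUnion.2 ⟨i, mem_iUnion.2 ⟨hi, _, ⟨⟨x, rfl⟩, (hx i).le, hle⟩, rfl⟩⟩) rfl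

section Cons

variable (χ : (Fin (m + 1) → ℚ) →ₗ[ℚ] ℚ)

def headCoeff : ℚ := χ (Pi.single 0 1)

def tailForm : (Fin m → ℚ) →ₗ[ℚ] ℚ :=
  χ ∘ₗ (Fin.consLinearEquiv ℚ fun _ => ℚ).toLinearMap ∘ₗ LinearMap.inr ℚ ℚ _

lemma apply_cons (t : ℚ) (β : Fin m → ℚ) :
    χ (Fin.cons t β) = t * headCoeff χ + tailForm χ β := by
  have : (Fin.cons t β : Fin (m + 1) → ℚ) = t • Pi.single 0 1 + Fin.cons 0 β := by
    ext i; cases i using Fin.cases <;> simp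
  rw [this, map_add, map_smul, smul_eq_mul, headCoeff, tailForm]
  rfl

@[simp] lemma tailForm_zero : tailForm (0 : (Fin (m + 1) → ℚ) →ₗ[ℚ] ℚ) = 0 := rfl

end Cons

lemma exists_openPolyhedron_eq_headCoeff_mem {I : Type*}
    (φ : I → (Fin (m + 1) → ℚ) →ₗ[ℚ] ℚ) (a : I → ℚ) :
    ∃ (φ' : I → (Fin (m + 1) → ℚ) →ₗ[ℚ] ℚ) (a' : I → ℚ),
      openPolyhedron φ' a' = openPolyhedron φ a ∧
        ∀ i, headCoeff (φ' i) = 0 ∨ headCoeff (φ' i) = 1 ∨ headCoeff (φ' i) = -1 := by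
  classical
  set c : I → ℚ := fun i => if headCoeff (φ i) = 0 then 1 else |headCoeff (φ i)|⁻¹
  have hc : ∀ i, 0 < c i := fun i => by
    simp only [c]
    split_ifs with h
    exacts [one_pos, inv_pos.2 (abs_pos.2 h)]
  refine ⟨fun i => c i • φ i, fun i => c i * a i, ?_, fun i => ?_⟩
  · ext x
    simp only [openPolyhedron, mem_ofPred_eq, LinearMap.smul_apply, smul_eq_mul]
    exact forall_congr' fun i => mul_lt_mul_iff_right₀ (hc i)
  · change c i * headCoeff (φ i) = 0 ∨ c i * headCoeff (φ i) = 1 ∨ c i * headCoeff (φ i) = -1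
    simp only [c]
    rcases lt_trichotomy (headCoeff (φ i)) 0 with h | h | h
    · rw [if_neg h.ne, abs_of_neg h, inv_neg, neg_mul, inv_mul_cancel₀ h.ne]
      simp
    · simp [h]
    · rw [if_neg h.ne', abs_of_pos h, inv_mul_cancel₀ h.ne']
      simp

lemma cons_mem_openPolyhedron_of_le_of_le {I : Type*} {φ : I → (Fin (m + 1) → ℚ) →ₗ[ℚ] ℚ}
    {a : I → ℚ} {β : Fin m → ℚ} {s s' t : ℚ} (hs : Fin.cons s β ∈ openPolyhedron φ a)
    (hs' : Fin.cons s' β ∈ openPolyhedron φ a) (h₁ : s ≤ t) (h₂ : t ≤ s') :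
    Fin.cons t β ∈ openPolyhedron φ a := by
  intro i
  have h := hs i
  have h' := hs' i
  simp only [apply_cons] at h h' ⊢
  rcases le_total 0 (headCoeff (φ i)) with hγ | hγ <;> nlinarith

lemma exists_int_window {κ₁ κ₂ : Type*} [Finite κ₁] [Finite κ₂] (d : ℕ) (lo : κ₁ → ℚ)
    (hi : κ₂ → ℚ) (h : ∀ i j, lo i + d < hi j) :
    ∃ s : ℤ, (∀ i, lo i < s) ∧ ∀ j, (s : ℚ) + d - 1 < hi j := by
  cases isEmpty_or_nonempty κ₁ with
  | inl _ =>
    obtain ⟨B, hB⟩ := (finite_range hi).bddBelow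
    refine ⟨⌊B⌋ - d, isEmptyElim, fun j => ?_⟩
    have := hB ⟨j, rfl⟩
    have := Int.floor_le B
    push_cast
    linarith
  | inr _ =>
    obtain ⟨i₀, hi₀⟩ := Finite.exists_max lo
    refine ⟨⌊lo i₀⌋ + 1, fun i => ?_, fun j => ?_⟩
    · have := Int.lt_floor_add_one (lo i₀)
      push_cast
      linarith [hi₀ i]
    · have := Int.floor_le (lo i₀)
      have := h i₀ j
      push_cast
      linarith

lemma mem_of_mem_window {ι W : Type*} [AddCommGroup W] {d : ℕ} {h : ℤ → ι → W}
    {S : AddSubgroup W} {lo hi w₀ : ℤ} (hlo : lo ≤ w₀) (hhi : w₀ + d ≤ hi + 1)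
    (hwin : ∀ t, w₀ ≤ t → t < w₀ + d → ∀ i, h t i ∈ S)
    (hrec : ∀ t, lo ≤ t → t ≤ hi → ∀ ε : ℤ, (ε = 1 ∨ ε = -1) →
      (∀ k : ℕ, 1 ≤ k → k ≤ d → lo ≤ t + k * ε ∧ t + k * ε ≤ hi) →
      ∀ i, h t i ∈ AddSubgroup.closure {w | ∃ k : ℕ, 1 ≤ k ∧ k ≤ d ∧ ∃ i', w = h (t + k * ε) i'}) :
    ∀ t, lo ≤ t → t ≤ hi → ∀ i, h t i ∈ S := by
  intro t
  induction hn : (w₀ - t).toNat + (t + 1 - w₀ - d).toNat using Nat.strong_induction_on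
    generalizing t with
  | _ n ih =>
    intro h₁ h₂ i
    by_cases hw : w₀ ≤ t ∧ t < w₀ + d
    · exact hwin t hw.1 hw.2 i
    -- stepping towards the window, each point reached is in it or strictly closer to it
    have step : ∀ ε : ℤ, (ε = 1 ∨ ε = -1) → (∀ k : ℕ, 1 ≤ k → k ≤ d →
        lo ≤ t + k * ε ∧ t + k * ε ≤ hi ∧ ((w₀ ≤ t + k * ε ∧ t + k * ε < w₀ + d) ∨
          (w₀ - (t + k * ε)).toNat + (t + k * ε + 1 - w₀ - d).toNat < n)) → h t i ∈ S := by
      intro ε hε hk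
      refine (AddSubgroup.closure_le S).2 ?_ (hrec t h₁ h₂ ε hε (fun k hk₁ hk₂ =>
        ⟨(hk k hk₁ hk₂).1, (hk k hk₁ hk₂).2.1⟩) i)
      rintro _ ⟨k, hk₁, hk₂, i', rfl⟩
      obtain ⟨hlo', hhi', hwin' | hlt⟩ := hk k hk₁ hk₂
      · exact hwin _ hwin'.1 hwin'.2 i'
      · exact ih _ hlt _ rfl hlo' hhi' i'
    rcases lt_or_ge t w₀ with hlt | hge
    · exact step 1 (Or.inl rfl) fun k hk₁ hk₂ => by omega
    · exact step (-1) (Or.inr rfl) fun k hk₁ hk₂ => by omega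

section Recurrence

variable {ι W : Type*} [AddCommGroup W]

def IsRecurrentOn (d : ℕ) (P : Set (Fin m → ℚ)) (F : (Fin m → ℤ) → ι → W)
    (e : Fin m → Fin m → ℤ) : Prop :=
  ∀ x, toRat x ∈ P → ∀ (l : Fin m) (ε : ℤ), (ε = 1 ∨ ε = -1) →
    (∀ k : ℕ, 1 ≤ k → k ≤ d → toRat (x + (k : ℤ) • ε • e l) ∈ P) →
    ∀ i, F x i ∈ AddSubgroup.closure
      {w | ∃ k : ℕ, 1 ≤ k ∧ k ≤ d ∧ ∃ i', w = F (x + (k : ℤ) • ε • e l) i'}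

def SpanBoundedOffAffine (d : ℕ) (P : Set (Fin m → ℚ)) (F : (Fin m → ℤ) → ι → W) : Prop :=
  ∃ 𝒜 : Set (Set (Fin m → ℚ)), 𝒜.Finite ∧ (∀ A ∈ 𝒜, IsProperAffine ℚ A) ∧
    ∃ g : (Fin m → Fin d) × ι → W,
      AddSubgroup.closure {w | ∃ x, toRat x ∈ P ∧ (∀ A ∈ 𝒜, toRat x ∉ A) ∧ ∃ i, w = F x i} ≤
        AddSubgroup.closure (range g)

def windowValues (d : ℕ) (F : (Fin (m + 1) → ℤ) → ι → W) (w₀ : ℤ) (b : Fin m → ℤ) :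
    Fin d × ι → W :=
  fun p => F (Fin.cons (w₀ + p.1) b) p.2

lemma cons_add_smul_single_zero (t k ε : ℤ) (b : Fin m → ℤ) :
    (Fin.cons t b : Fin (m + 1) → ℤ) + k • ε • Pi.single 0 1 = Fin.cons (t + k * ε) b := by
  ext i; cases i using Fin.cases <;> simp [mul_comm]

lemma cons_add_smul_single_succ (t k ε : ℤ) (b : Fin m → ℤ) (l : Fin m) :
    (Fin.cons t b : Fin (m + 1) → ℤ) + k • ε • Pi.single l.succ 1 =
      Fin.cons t (b + k • ε • Pi.single l 1) := by
  ext i; cases i using Fin.cases <;> simp [Pi.single_apply]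

variable {d : ℕ} {I : Type*} {φ : I → (Fin (m + 1) → ℚ) →ₗ[ℚ] ℚ} {a : I → ℚ}
  {F : (Fin (m + 1) → ℤ) → ι → W}

lemma mem_closure_windowValues (hF : IsRecurrentOn d (openPolyhedron φ a) F (Pi.single · 1))
    (hd : 1 ≤ d) {b : Fin m → ℤ} {w₀ s : ℤ}
    (hwin : ∀ t, w₀ ≤ t → t < w₀ + d → toRat (Fin.cons t b) ∈ openPolyhedron φ a)
    (hs : toRat (Fin.cons s b) ∈ openPolyhedron φ a) (i : ι) :
    F (Fin.cons s b) i ∈ AddSubgroup.closure (range (windowValues d F w₀ b)) := by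
  have hfibre : ∀ t, min s w₀ ≤ t → t ≤ max s (w₀ + d - 1) →
      toRat (Fin.cons t b) ∈ openPolyhedron φ a := by
    intro t h₁ h₂
    obtain ⟨u, hu, hut⟩ : ∃ u, toRat (Fin.cons u b) ∈ openPolyhedron φ a ∧ u ≤ t := by
      by_cases hst : s ≤ t
      exacts [⟨s, hs, hst⟩, ⟨w₀, hwin w₀ le_rfl (by omega), by omega⟩]
    obtain ⟨v, hv, htv⟩ : ∃ v, toRat (Fin.cons v b) ∈ openPolyhedron φ a ∧ t ≤ v := by
      by_cases hts : t ≤ s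
      exacts [⟨s, hs, hts⟩, ⟨w₀ + d - 1, hwin _ (by omega) (by omega), by omega⟩]
    rw [toRat_cons] at hu hv ⊢
    exact cons_mem_openPolyhedron_of_le_of_le hu hv (by exact_mod_cast hut)
      (by exact_mod_cast htv)
  refine mem_of_mem_window (d := d) (h := fun t => F (Fin.cons t b))
    (S := AddSubgroup.closure (range (windowValues d F w₀ b))) (lo := min s w₀)
    (hi := max s (w₀ + d - 1)) (min_le_right s w₀) (by omega)
    (fun t h₁ h₂ i => AddSubgroup.subset_closure ⟨(⟨(t - w₀).toNat, by omega⟩, i), ?_⟩)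
    (fun t h₁ h₂ ε hε hk i => ?_) s (min_le_left _ _) (le_max_left _ _) i
  · simp only [windowValues]
    congr
    omega
  · have := hF _ (hfibre t h₁ h₂) 0 ε hε (fun k hk₁ hk₂ => by
      rw [cons_add_smul_single_zero]
      exact hfibre _ (hk k hk₁ hk₂).1 (hk k hk₁ hk₂).2) i
    simpa only [cons_add_smul_single_zero] using this

noncomputable def offsets (m d : ℕ) : Finset (Fin m → ℤ) :=
  Fintype.piFinset fun _ => Finset.Icc (-(d : ℤ)) d

lemma zero_mem_offsets : (0 : Fin m → ℤ) ∈ offsets m d := by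
  simp [offsets]

lemma smul_single_mem_offsets {ε : ℤ} (hε : ε = 1 ∨ ε = -1) {k : ℕ} (hk : k ≤ d) (l : Fin m) :
    (k : ℤ) • ε • Pi.single l 1 ∈ offsets m d := by
  simp only [offsets, Fintype.mem_piFinset, Finset.mem_Icc]
  intro j
  by_cases h : j = l <;> rcases hε with rfl | rfl <;> simp [h] <;> omega

lemma isRecurrentOn_windowValues (hF : IsRecurrentOn d (openPolyhedron φ a) F (Pi.single · 1))
    (hd : 1 ≤ d) {Q : Set (Fin m → ℚ)} {s₀ : (Fin m → ℤ) → ℤ}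
    (hs₀ : ∀ b, toRat b ∈ Q → ∀ o ∈ offsets m d, ∀ t, s₀ b ≤ t → t < s₀ b + d →
      toRat (Fin.cons t (b + o)) ∈ openPolyhedron φ a) :
    IsRecurrentOn d Q (fun b => windowValues d F (s₀ b) b) (Pi.single · 1) := by
  rintro b hb l ε hε hsteps ⟨j, i⟩
  have hwin : ∀ b, toRat b ∈ Q → ∀ t, s₀ b ≤ t → t < s₀ b + d →
      toRat (Fin.cons t b) ∈ openPolyhedron φ a := fun b hb t h₁ h₂ => by
    simpa using hs₀ b hb 0 zero_mem_offsets t h₁ h₂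
  have hstep : ∀ k : ℕ, 1 ≤ k → k ≤ d → toRat ((Fin.cons (s₀ b + j) b : Fin (m + 1) → ℤ) +
      (k : ℤ) • ε • Pi.single l.succ 1) ∈ openPolyhedron φ a := fun k _ hk => by
    rw [cons_add_smul_single_succ]
    exact hs₀ b hb _ (smul_single_mem_offsets hε hk l) _ (by omega) (by omega)
  refine (AddSubgroup.closure_le _).2 ?_
    (hF _ (hwin b hb _ (by omega) (by omega)) l.succ ε hε hstep i)
  rintro _ ⟨k, hk₁, hk₂, i', rfl⟩
  rw [cons_add_smul_single_succ]
  refine AddSubgroup.closure_mono ?_ (mem_closure_windowValues hF hd (hwin _ (hsteps k hk₁ hk₂))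
    (by simpa only [cons_add_smul_single_succ] using hstep k hk₁ hk₂) i')
  rintro _ ⟨p, rfl⟩
  exact ⟨k, hk₁, hk₂, p, rfl⟩

end Recurrence

section Projection

variable {I : Type*} (φ : I → (Fin (m + 1) → ℚ) →ₗ[ℚ] ℚ) (a : I → ℚ) (d : ℕ)

/- Fourier–Motzkin elimination of the first coordinate: an upper face `i`, a lower face `j` and a
flat face `z`, each evaluated over `β + o` for all offsets `o`, with a gap larger than `d` between
the upper and the lower bounds. -/
abbrev ProjIndex : Type _ :=
  ({i // headCoeff (φ i) = -1} × {j // headCoeff (φ j) = 1} × offsets m d × offsets m d) ⊕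
    ({z // headCoeff (φ z) = 0} × offsets m d)

def projForm : ProjIndex φ d → (Fin m → ℚ) →ₗ[ℚ] ℚ
  | .inl (i, j, _, _) => tailForm (φ i) + tailForm (φ j)
  | .inr (z, _) => tailForm (φ z)

def projConst : ProjIndex φ d → ℚ
  | .inl (i, j, o, o') => a i + a j + d - tailForm (φ i) (toRat o) - tailForm (φ j) (toRat o')
  | .inr (z, o) => a z - tailForm (φ z) (toRat o)

abbrev projPolyhedron : Set (Fin m → ℚ) := openPolyhedron (projForm φ d) (projConst φ a d)

lemma mem_projPolyhedron {β : Fin m → ℚ} :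
    β ∈ projPolyhedron φ a d ↔
      (∀ (i : {i // headCoeff (φ i) = -1}) (j : {j // headCoeff (φ j) = 1}) (o o' : offsets m d),
        a j - tailForm (φ j) (β + toRat o') + d < tailForm (φ i) (β + toRat o) - a i) ∧
      ∀ (z : {z // headCoeff (φ z) = 0}) (o : offsets m d), a z < tailForm (φ z) (β + toRat o) := by
  constructor
  · intro h
    refine ⟨fun i j o o' => ?_, fun z o => ?_⟩
    · have := h (.inl (i, j, o, o'))
      simp only [projForm, projConst, LinearMap.add_apply, map_add] at this ⊢
      linarith
    · have := h (.inr (z, o))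
      simp only [projForm, projConst, map_add] at this ⊢
      linarith
  · rintro ⟨h₁, h₂⟩ (⟨i, j, o, o'⟩ | ⟨z, o⟩)
    · have := h₁ i j o o'
      simp only [projForm, projConst, LinearMap.add_apply, map_add] at this ⊢
      linarith
    · have := h₂ z o
      simp only [projForm, projConst, map_add] at this ⊢
      linarith

variable {φ a d}

lemma exists_window [Finite I]
    (hnorm : ∀ i, headCoeff (φ i) = 0 ∨ headCoeff (φ i) = 1 ∨ headCoeff (φ i) = -1)
    {b : Fin m → ℤ} (hb : toRat b ∈ projPolyhedron φ a d) :
    ∃ s : ℤ, ∀ o ∈ offsets m d, ∀ t, s ≤ t → t < s + d →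
      toRat (Fin.cons t (b + o)) ∈ openPolyhedron φ a := by
  rw [mem_projPolyhedron] at hb
  obtain ⟨s, hlo, hhi⟩ := exists_int_window d
    (fun p : {j // headCoeff (φ j) = 1} × offsets m d =>
      a p.1 - tailForm (φ p.1) (toRat b + toRat p.2))
    (fun p : {i // headCoeff (φ i) = -1} × offsets m d =>
      tailForm (φ p.1) (toRat b + toRat p.2) - a p.1)
    (fun p q => by exact hb.1 q.1 p.1 q.2 p.2)
  refine ⟨s, fun o ho t h₁ h₂ k => ?_⟩
  have h₁' : (s : ℚ) ≤ t := by exact_mod_cast h₁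
  have h₂' : (t : ℚ) ≤ s + d - 1 := by
    have : t ≤ s + d - 1 := by omega
    exact_mod_cast this
  rw [toRat_cons, toRat_add, apply_cons]
  rcases hnorm k with h | h | h
  · rw [h, mul_zero, zero_add]
    exact hb.2 ⟨k, h⟩ ⟨o, ho⟩
  · have := hlo (⟨k, h⟩, ⟨o, ho⟩)
    rw [h]
    dsimp only at this
    linarith
  · have := hhi (⟨k, h⟩, ⟨o, ho⟩)
    rw [h]
    dsimp only at this
    linarith

lemma toRat_tail_mem_projPolyhedron {M : ℚ}
    (hM : ∀ i, ∀ o ∈ offsets m d, |tailForm (φ i) (toRat o)| ≤ M) {x : Fin (m + 1) → ℤ}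
    (hx : toRat x ∈ openPolyhedron φ a)
    (hdeep : ∀ i, φ i ≠ 0 → a i + (d + M) < φ i (toRat x)) :
    toRat (Fin.tail x) ∈ projPolyhedron φ a d := by
  have hx' : toRat x = Fin.cons (x 0 : ℚ) (toRat (Fin.tail x)) := by
    rw [← toRat_cons, Fin.cons_self_tail]
  have hne : ∀ i, headCoeff (φ i) ≠ 0 → φ i ≠ 0 := by
    rintro i h hi
    simp [hi, headCoeff] at h
  have hd : (0 : ℚ) ≤ d := d.cast_nonneg
  rw [mem_projPolyhedron]
  refine ⟨fun i j o o' => ?_, fun z o => ?_⟩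
  · have hi := hdeep i (hne i (by simp [i.2]))
    have hj := hdeep j (hne j (by simp [j.2]))
    rw [hx', apply_cons, i.2] at hi
    rw [hx', apply_cons, j.2] at hj
    have := abs_le.1 (hM i o o.2)
    have := abs_le.1 (hM j o' o'.2)
    simp only [map_add]
    linarith
  · by_cases hz : φ z = 0
    · have := hx z
      rw [hz] at this ⊢
      simpa using this
    · have h := hdeep z hz
      rw [hx', apply_cons, z.2, mul_zero, zero_add] at h
      have := abs_le.1 (hM z o o.2)
      rw [map_add]
      linarith

end Projection

variable {W : Type*} [AddCommGroup W] {d : ℕ}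

theorem spanBoundedOffAffine_succ {I : Type} [Finite I] {φ : I → (Fin (m + 1) → ℚ) →ₗ[ℚ] ℚ}
    {a : I → ℚ} {ι : Type} {F : (Fin (m + 1) → ℤ) → ι → W} (hd : 1 ≤ d)
    (hnorm : ∀ i, headCoeff (φ i) = 0 ∨ headCoeff (φ i) = 1 ∨ headCoeff (φ i) = -1)
    (IH : ∀ {J : Type} [Finite J] (ψ : J → (Fin m → ℚ) →ₗ[ℚ] ℚ) (c : J → ℚ) {κ : Type}
      (G : (Fin m → ℤ) → κ → W), IsRecurrentOn d (openPolyhedron ψ c) G (Pi.single · 1) →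
        SpanBoundedOffAffine d (openPolyhedron ψ c) G)
    (hF : IsRecurrentOn d (openPolyhedron φ a) F (Pi.single · 1)) :
    SpanBoundedOffAffine d (openPolyhedron φ a) F := by
  choose! s₀ hs₀ using fun b (hb : toRat b ∈ projPolyhedron φ a d) => exists_window hnorm hb
  obtain ⟨𝒜, h𝒜, h𝒜A, g, hg⟩ := IH _ _ _ (isRecurrentOn_windowValues hF hd hs₀)
  obtain ⟨M, hM⟩ : ∃ M, ∀ i, ∀ o ∈ offsets m d, |tailForm (φ i) (toRat o)| ≤ M := by
    obtain ⟨M, hM⟩ := (finite_range fun p : I × offsets m d =>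
      |tailForm (φ p.1) (toRat p.2)|).bddAbove
    exact ⟨M, fun i o ho => hM ⟨(i, ⟨o, ho⟩), rfl⟩⟩
  obtain ⟨ℬ, hℬ, hℬA, hdeep⟩ := exists_finite_properAffine_add_lt φ a (d + M)
  refine ⟨ℬ ∪ (LinearMap.funLeft ℚ ℚ Fin.succ ⁻¹' ·) '' 𝒜, hℬ.union (h𝒜.image _), ?_,
    fun p => g (Fin.tail p.1, p.1 0, p.2), (AddSubgroup.closure_le _).2 ?_⟩
  · rintro A (hA | ⟨A, hA, rfl⟩)
    exacts [hℬA A hA, (h𝒜A A hA).preimage _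
      (LinearMap.funLeft_surjective_of_injective _ _ _ (Fin.succ_injective m))]
  rintro _ ⟨x, hx, hoff, i, rfl⟩
  have hb : toRat (Fin.tail x) ∈ projPolyhedron φ a d :=
    toRat_tail_mem_projPolyhedron hM hx (hdeep x hx fun A hA => hoff A (.inl hA))
  have hwx := mem_closure_windowValues hF hd (b := Fin.tail x) (s := x 0)
    (fun t h₁ h₂ => by simpa using hs₀ _ hb 0 zero_mem_offsets t h₁ h₂)
    (by rwa [Fin.cons_self_tail]) i
  rw [Fin.cons_self_tail] at hwx
  refine (AddSubgroup.closure_le _).2 ?_ hwx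
  rintro _ ⟨p, rfl⟩
  refine AddSubgroup.closure_mono ?_ (hg (AddSubgroup.subset_closure
    ⟨Fin.tail x, hb, fun A hA => hoff _ (.inr ⟨A, hA, rfl⟩), p, rfl⟩))
  rintro _ ⟨⟨u, j, i⟩, rfl⟩
  exact ⟨(Fin.cons j u, i), by simp⟩

theorem spanBoundedOffAffine (hd : 1 ≤ d) :
    ∀ (m : ℕ) {I : Type} [Finite I] (φ : I → (Fin m → ℚ) →ₗ[ℚ] ℚ) (a : I → ℚ) {ι : Type}
      (F : (Fin m → ℤ) → ι → W), IsRecurrentOn d (openPolyhedron φ a) F (Pi.single · 1) →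
        SpanBoundedOffAffine d (openPolyhedron φ a) F
  | 0, _, _, _, _, _, F, _ =>
    ⟨∅, finite_empty, by simp, fun p => F 0 p.2, (AddSubgroup.closure_le _).2 <| by
      rintro _ ⟨x, -, -, i, rfl⟩
      exact AddSubgroup.subset_closure ⟨(finZeroElim, i), by simp [Subsingleton.elim x 0]⟩⟩
  | m + 1, _, _, φ, a, _, F, hF => by
    obtain ⟨φ', a', hP, hnorm⟩ := exists_openPolyhedron_eq_headCoeff_mem φ a
    rw [← hP] at hF ⊢
    exact spanBoundedOffAffine_succ hd hnorm (spanBoundedOffAffine hd m) hF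

lemma exists_ratLinearMap (L : (Fin m → ℤ) →ₗ[ℤ] (Fin m → ℤ)) :
    ∃ LQ : (Fin m → ℚ) →ₗ[ℚ] (Fin m → ℚ), ∀ x, LQ (toRat x) = toRat (L x) := by
  refine ⟨Matrix.toLin' (L.toMatrix'.map (Int.castRingHom ℚ)), fun x => ?_⟩
  ext i
  rw [Matrix.toLin'_apply, toRat_apply, ← LinearMap.toMatrix'_mulVec]
  exact (RingHom.map_mulVec (Int.castRingHom ℚ) _ x i).symm

lemma exists_ratLinearEquiv (T : (Fin m → ℤ) ≃ₗ[ℤ] (Fin m → ℤ)) :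
    ∃ TQ : (Fin m → ℚ) ≃ₗ[ℚ] (Fin m → ℚ), ∀ x, TQ (toRat x) = toRat (T x) := by
  obtain ⟨TQ, hT⟩ := exists_ratLinearMap T.toLinearMap
  obtain ⟨SQ, hS⟩ := exists_ratLinearMap T.symm.toLinearMap
  have inv : ∀ (L₁ L₂ : (Fin m → ℚ) →ₗ[ℚ] (Fin m → ℚ)) (M₁ M₂ : (Fin m → ℤ) →ₗ[ℤ] (Fin m → ℤ)),
      (∀ x, L₁ (toRat x) = toRat (M₁ x)) → (∀ x, L₂ (toRat x) = toRat (M₂ x)) →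
      (∀ x, M₁ (M₂ x) = x) → L₁ ∘ₗ L₂ = LinearMap.id := fun L₁ L₂ M₁ M₂ h₁ h₂ hM =>
    (Pi.basisFun ℚ (Fin m)).ext fun l => by
      simp only [Pi.basisFun_apply, LinearMap.comp_apply, LinearMap.id_apply, ← toRat_single,
        h₂, h₁, hM]
  exact ⟨.ofLinearMap TQ SQ (inv _ _ _ _ hT hS T.apply_symm_apply)
    (inv _ _ _ _ hS hT T.symm_apply_apply), hT⟩

section ChangeOfBasis

variable {ι : Type*} {P : Set (Fin m → ℚ)} {F : (Fin m → ℤ) → ι → W}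
  {T : (Fin m → ℤ) ≃ₗ[ℤ] (Fin m → ℤ)} {TQ : (Fin m → ℚ) ≃ₗ[ℚ] (Fin m → ℚ)}

lemma IsRecurrentOn.comp_linearEquiv {e e' : Fin m → Fin m → ℤ} (hF : IsRecurrentOn d P F e')
    (hT : ∀ x, TQ (toRat x) = toRat (T x)) (he : ∀ l, T (e l) = e' l) :
    IsRecurrentOn d (TQ ⁻¹' P) (fun x => F (T x)) e := by
  intro x hx l ε hε hk i
  simp only [mem_preimage, hT, map_add, map_smul, he] at hx hk ⊢
  exact hF _ hx l ε hε hk i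

lemma SpanBoundedOffAffine.of_comp_linearEquiv
    (h : SpanBoundedOffAffine d (TQ ⁻¹' P) fun x => F (T x))
    (hT : ∀ x, TQ (toRat x) = toRat (T x)) : SpanBoundedOffAffine d P F := by
  obtain ⟨𝒜, h𝒜, h𝒜A, g, hg⟩ := h
  have hT' : ∀ x, TQ.symm (toRat x) = toRat (T.symm x) := fun x => by
    rw [TQ.symm_apply_eq, hT, T.apply_symm_apply]
  refine ⟨(TQ.symm ⁻¹' ·) '' 𝒜, h𝒜.image _, ?_, g, (AddSubgroup.closure_le _).2 ?_⟩
  · rintro _ ⟨A, hA, rfl⟩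
    exact (h𝒜A A hA).preimage TQ.symm.toLinearMap TQ.symm.surjective
  · rintro _ ⟨x, hx, hoff, i, rfl⟩
    refine hg (AddSubgroup.subset_closure
      ⟨T.symm x, ?_, fun A hA h => hoff _ ⟨A, hA, rfl⟩ ?_, i, by simp⟩)
    · rwa [mem_preimage, hT, T.apply_symm_apply]
    · rwa [mem_preimage, hT']

end ChangeOfBasis

theorem spanBoundedOffAffine_of_basis (hd : 1 ≤ d) {I : Type} [Finite I]
    (φ : I → (Fin m → ℚ) →ₗ[ℚ] ℚ) (a : I → ℚ) (e : Module.Basis (Fin m) ℤ (Fin m → ℤ))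
    {ι : Type} {F : (Fin m → ℤ) → ι → W} (hF : IsRecurrentOn d (openPolyhedron φ a) F e) :
    SpanBoundedOffAffine d (openPolyhedron φ a) F := by
  obtain ⟨TQ, hTQ⟩ := exists_ratLinearEquiv e.equivFun.symm
  have : SpanBoundedOffAffine d (TQ ⁻¹' openPolyhedron φ a) fun x => F (e.equivFun.symm x) :=
    spanBoundedOffAffine hd m (fun i => φ i ∘ₗ TQ.toLinearMap) a _
      (hF.comp_linearEquiv hTQ (Basis.equivFun_symm_single e))
  exact this.of_comp_linearEquiv hTQ

lemma SpanBoundedOffAffine.mono {ι : Type*} {P Q : Set (Fin m → ℚ)} {F : (Fin m → ℤ) → ι → W}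
    (h : SpanBoundedOffAffine d P F) {ℬ : Set (Set (Fin m → ℚ))} (hℬ : ℬ.Finite)
    (hℬA : ∀ B ∈ ℬ, IsProperAffine ℚ B) (hQP : ∀ y ∈ Q, (∀ B ∈ ℬ, y ∉ B) → y ∈ P) :
    SpanBoundedOffAffine d Q F := by
  obtain ⟨𝒜, h𝒜, h𝒜A, g, hg⟩ := h
  refine ⟨𝒜 ∪ ℬ, h𝒜.union hℬ, fun A hA => hA.elim (h𝒜A A) (hℬA A), g,
    le_trans (AddSubgroup.closure_mono ?_) hg⟩
  rintro _ ⟨x, hx, hoff, i, rfl⟩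
  exact ⟨x, hQP _ hx fun B hB => hoff B (.inr hB), fun A hA => hoff A (.inl hA), i, rfl⟩

theorem spanBoundedOffAffine_interior {I : Type} [Finite I] (hd : 1 ≤ d)
    (φ : I → (Fin m → ℚ) →ₗ[ℚ] ℚ) (a : I → ℚ) (e : Module.Basis (Fin m) ℤ (Fin m → ℤ))
    {ι : Type} {F : (Fin m → ℤ) → ι → W}
    (hF : IsRecurrentOn d (interior (⋂ i, {x | a i ≤ φ i x})) F e) :
    SpanBoundedOffAffine d (interior (⋂ i, {x | a i ≤ φ i x})) F := by
  classical
  by_cases h0 : ∀ i, φ i = 0 → a i ≤ 0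
  · set P := openPolyhedron (fun j : {i // φ i ≠ 0} => φ j) (fun j => a j)
    have hPV : P ⊆ interior (⋂ i, {x | a i ≤ φ i x}) := interior_maximal
      (fun y hy => mem_iInter.2 fun i =>
        if hi : φ i = 0 then by simp [hi, h0 i hi] else (hy ⟨i, hi⟩).le)
      (isOpen_openPolyhedron _ _)
    refine (spanBoundedOffAffine_of_basis hd _ _ e fun x hx l ε hε hk =>
      hF x (hPV hx) l ε hε fun k h₁ h₂ => hPV (hk k h₁ h₂)).mono
      (finite_range fun j : {i // φ i ≠ 0} => φ j ⁻¹' {a j})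
      (by rintro _ ⟨j, rfl⟩; exact isProperAffine_hyperplane j.2 _) fun y hy hoff j => ?_
    have hyV : ∀ i, a i ≤ φ i y := by simpa using interior_subset hy
    exact lt_of_le_of_ne (hyV j) fun h => hoff _ ⟨j, rfl⟩ h.symm
  · obtain ⟨i, hi, ha⟩ : ∃ i, φ i = 0 ∧ 0 < a i := by simpa using h0
    refine ⟨∅, finite_empty, by simp, 0, (AddSubgroup.closure_le _).2 ?_⟩
    rintro _ ⟨x, hx, -, -⟩
    have := mem_iInter.1 (interior_subset hx) i
    simp only [mem_ofPred_eq, hi, LinearMap.zero_apply] at this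
    linarith

lemma SpanBoundedOffAffine.exists_fin {Q : Set (Fin m → ℚ)} {f : (Fin m → ℤ) → W}
    (h : SpanBoundedOffAffine d Q fun x (_ : Unit) => f x) :
    ∃ (k : ℕ) (Vfam : Fin k → Set (Fin m → ℚ)),
      (∀ j, ∃ (p : Submodule ℚ (Fin m → ℚ)) (v : Fin m → ℚ),
        p ≠ ⊤ ∧ Vfam j = (fun y => v + y) '' (p : Set (Fin m → ℚ))) ∧
      ∃ g : Fin (d ^ m) → W,
        AddSubgroup.closure {w | ∃ x, toRat x ∈ Q ∧ (∀ j, toRat x ∉ Vfam j) ∧ w = f x} ≤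
          AddSubgroup.closure (range g) := by
  obtain ⟨𝒜, h𝒜, h𝒜A, g, hg⟩ := h
  obtain ⟨s, rfl⟩ := h𝒜.exists_finset_coe
  refine ⟨s.card, fun j => s.equivFin.symm j, fun j => h𝒜A _ (s.equivFin.symm j).2,
    fun j => g (finFunctionFinEquiv.symm j, ()), (AddSubgroup.closure_le _).2 ?_⟩
  rintro _ ⟨x, hx, hoff, rfl⟩
  refine AddSubgroup.closure_mono ?_
    (hg (AddSubgroup.subset_closure ⟨x, hx, fun A hA => ?_, (), rfl⟩))
  · rintro _ ⟨⟨v, ⟨⟩⟩, rfl⟩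
    exact ⟨finFunctionFinEquiv v, by simp⟩
  · simpa using hoff (s.equivFin ⟨A, hA⟩)

end LatticeRecurrence

open LatticeRecurrence

theorem stmt2_general (n d : ℕ) (hd : 1 ≤ d)
    {I : Type} [Fintype I] (φ : I → ((Fin n → ℚ) →ₗ[ℚ] ℚ)) (a : I → ℚ)
    (e : Module.Basis (Fin n) ℤ (Fin n → ℤ))
    (W : Type) [AddCommGroup W] (f : (Fin n → ℤ) → W)
    (V : Set (Fin n → ℚ)) (hV : V = ⋂ i, {x | a i ≤ φ i x})
    (hf : ∀ x : Fin n → ℤ, (fun i => (x i : ℚ)) ∈ interior V →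
      ∀ l : Fin n, ∀ ε : ℤ, (ε = 1 ∨ ε = -1) →
        (∀ k : ℕ, 1 ≤ k → k ≤ d →
          (fun i => (((x + (k : ℤ) • ε • e l) i : ℤ) : ℚ)) ∈ interior V) →
        f x ∈ AddSubgroup.closure
          {w : W | ∃ k : ℕ, 1 ≤ k ∧ k ≤ d ∧ w = f (x + (k : ℤ) • ε • e l)}) :
    ∃ (m : ℕ) (Vfam : Fin m → Set (Fin n → ℚ)),
      (∀ j, ∃ (p : Submodule ℚ (Fin n → ℚ)) (v : Fin n → ℚ),
        p ≠ ⊤ ∧ Vfam j = (fun y => v + y) '' (p : Set (Fin n → ℚ))) ∧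
      ∃ g : Fin (d ^ n) → W,
        AddSubgroup.closure
          {w : W | ∃ x : Fin n → ℤ, (fun i => (x i : ℚ)) ∈ interior V ∧
            (∀ j, (fun i => (x i : ℚ)) ∉ Vfam j) ∧ w = f x} ≤
        AddSubgroup.closure (Set.range g) := by
  subst hV
  refine SpanBoundedOffAffine.exists_fin (spanBoundedOffAffine_interior hd φ a e ?_)
  intro x hx l ε hε hk _
  simpa using hf x hx l ε hε hk

theorem stmt2 (n d : ℕ) (hn : 1 ≤ n) (hd : 1 ≤ d)
    {I : Type} [Fintype I] (φ : I → ((Fin n → ℚ) →ₗ[ℚ] ℚ)) (a : I → ℚ)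
    (e : Module.Basis (Fin n) ℤ (Fin n → ℤ))
    (W : Type) [AddCommGroup W] (f : (Fin n → ℤ) → W)
    (V : Set (Fin n → ℚ)) (hV : V = ⋂ i, {x | a i ≤ φ i x})
    (hf : ∀ x : Fin n → ℤ, (fun i => (x i : ℚ)) ∈ interior V →
      ∀ l : Fin n, ∀ ε : ℤ, (ε = 1 ∨ ε = -1) →
        (∀ k : ℕ, 1 ≤ k → k ≤ d →
          (fun i => (((x + (k : ℤ) • ε • e l) i : ℤ) : ℚ)) ∈ interior V) →
        f x ∈ AddSubgroup.closure
          {w : W | ∃ k : ℕ, 1 ≤ k ∧ k ≤ d ∧ w = f (x + (k : ℤ) • ε • e l)}) :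
    ∃ (m : ℕ) (Vfam : Fin m → Set (Fin n → ℚ)),
      (∀ j, ∃ (p : Submodule ℚ (Fin n → ℚ)) (v : Fin n → ℚ),
        p ≠ ⊤ ∧ Vfam j = (fun y => v + y) '' (p : Set (Fin n → ℚ))) ∧
      ∃ g : Fin (d ^ n) → W,
        AddSubgroup.closure
          {w : W | ∃ x : Fin n → ℤ, (fun i => (x i : ℚ)) ∈ interior V ∧
            (∀ j, (fun i => (x i : ℚ)) ∉ Vfam j) ∧ w = f x} ≤
        AddSubgroup.closure (Set.range g) :=
  stmt2_general n d hd φ a e W f V hV hf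
end

section
/- If two axis-aligned cubes C₁ = t₁ + [0,d)ⁿ and C₂ = t₂ + [0,d)ⁿ (with t₂ - t₁ = d·e_l for some standard basis vector e_l) share a face, and f : ℤⁿ → W satisfies the recurrence property that f(x) lies in the ℤ-span of {f(x + kε·e_l) : 1 ≤ k ≤ d} for all relevant x and ε ∈ {±1}, then the ℤ-span of {f(x) : x ∈ ℤⁿ ∩ C₁} equals the ℤ-span of {f(x) : x ∈ ℤⁿ ∩ C₂}. -/
/-- The half-open axis-aligned cube of side `d` based at `t`, as a set of lattice points. -/
def latCube {n : ℕ} (t : Fin n → ℤ) (d : ℕ) : Set (Fin n → ℤ) :=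
  {x | ∀ i, t i ≤ x i ∧ x i < t i + d}

theorem stmt3 (n d : ℕ) (hd : 1 ≤ d) (W : Type) [AddCommGroup W]
    (f : (Fin n → ℤ) → W) (t₁ t₂ : Fin n → ℤ) (l : Fin n)
    (ht : t₂ = t₁ + (d : ℤ) • Pi.single l 1)
    (hf : ∀ (x : Fin n → ℤ) (ε : ℤ), (ε = 1 ∨ ε = -1) →
      x ∈ latCube t₁ d ∪ latCube t₂ d →
      (∀ k : ℕ, 1 ≤ k → k ≤ d →
        x + (k : ℤ) • ε • Pi.single l 1 ∈ latCube t₁ d ∪ latCube t₂ d) →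
      f x ∈ AddSubgroup.closure
        {w : W | ∃ k : ℕ, 1 ≤ k ∧ k ≤ d ∧ w = f (x + (k : ℤ) • ε • Pi.single l 1)}) :
    AddSubgroup.closure (f '' latCube t₁ d) = AddSubgroup.closure (f '' latCube t₂ d) := by
  subst ht
  set e : Fin n → ℤ := Pi.single l 1 with hedef
  -- coordinate computation for the shifted point
  have hcoord : ∀ (c : ℤ) (x : Fin n → ℤ) (i : Fin n),
      (x + c • e) i = x i + (if i = l then c else 0) := by
    intro c x i
    by_cases h : i = l <;> simp [hedef, Pi.single_apply, h]
  have ht2 : ∀ i : Fin n, (t₁ + (d : ℤ) • e) i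
      = t₁ i + (if i = l then (d:ℤ) else 0) := by
    intro i; exact hcoord _ t₁ i
  set t₂ : Fin n → ℤ := t₁ + (d : ℤ) • e with ht₂def
  -- membership characterizations
  have hmem1 : ∀ x : Fin n → ℤ, x ∈ latCube t₁ d ↔
      (∀ i, i ≠ l → t₁ i ≤ x i ∧ x i < t₁ i + d) ∧ (t₁ l ≤ x l ∧ x l < t₁ l + d) := by
    intro x
    constructor
    · intro h; exact ⟨fun i _ => h i, h l⟩
    · rintro ⟨h1, h2⟩ i
      by_cases hi : i = l
      · subst hi; exact h2
      · exact h1 i hi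
  have hmem2 : ∀ x : Fin n → ℤ, x ∈ latCube t₂ d ↔
      (∀ i, i ≠ l → t₁ i ≤ x i ∧ x i < t₁ i + d) ∧
        (t₁ l + d ≤ x l ∧ x l < t₁ l + d + d) := by
    intro x
    constructor
    · intro h
      refine ⟨fun i hi => ?_, ?_⟩
      · have := h i; rw [ht2 i] at this; simp [hi] at this; exact this
      · have := h l; rw [ht2 l] at this; simp at this
        exact ⟨this.1, by linarith [this.2]⟩
    · rintro ⟨h1, h2⟩ i
      rw [ht2 i]
      by_cases hi : i = l
      · subst hi; simp; exact ⟨h2.1, by linarith [h2.2]⟩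
      · simp [hi]; exact h1 i hi
  -- direction 1 : every point of C₁ lands in closure of f '' C₂
  have dir1 : ∀ m : ℕ, ∀ x : Fin n → ℤ, x ∈ latCube t₁ d ∪ latCube t₂ d →
      (t₁ l + d - x l).toNat = m → f x ∈ AddSubgroup.closure (f '' latCube t₂ d) := by
    intro m
    induction m using Nat.strong_induction_on with
    | _ m ih =>
      intro x hx hm
      rcases hx with hx1 | hx2
      swap
      · exact AddSubgroup.subset_closure ⟨x, hx2, rfl⟩
      rw [hmem1 x] at hx1
      obtain ⟨hside, hl1, hl2⟩ := hx1
      -- the shifted points stay in the union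
      have hstep : ∀ k : ℕ, 1 ≤ k → k ≤ d →
          x + (k : ℤ) • (1:ℤ) • e ∈ latCube t₁ d ∪ latCube t₂ d := by
        intro k hk1 hk2
        have he : (k : ℤ) • (1:ℤ) • e = (k:ℤ) • e := by
          rw [one_smul]
        rw [he]
        set y := x + (k:ℤ) • e with hy
        have hyc : ∀ i, y i = x i + (if i = l then (k:ℤ) else 0) := fun i => hcoord _ x i
        by_cases hcase : y l < t₁ l + d
        · left
          rw [hmem1]
          refine ⟨fun i hi => ?_, ?_⟩
          · rw [hyc i]; simp [hi]; exact hside i hi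
          · rw [hyc l]; simp; constructor
            · have : (0:ℤ) ≤ (k:ℤ) := by positivity
              linarith
            · rw [hyc l] at hcase; simpa using hcase
        · right
          rw [hmem2]
          refine ⟨fun i hi => ?_, ?_⟩
          · rw [hyc i]; simp [hi]; exact hside i hi
          · rw [hyc l] at hcase ⊢; simp at hcase ⊢
            refine ⟨hcase, ?_⟩
            have : (k:ℤ) ≤ (d:ℤ) := by exact_mod_cast hk2
            linarith
      have hmem : x ∈ latCube t₁ d ∪ latCube t₂ d := by
        left; rw [hmem1]; exact ⟨hside, hl1, hl2⟩
      have hcl := hf x 1 (Or.inl rfl) hmem hstep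
      refine AddSubgroup.closure_le _ |>.mpr ?_ hcl
      rintro w ⟨k, hk1, hk2, rfl⟩
      have he : (k : ℤ) • (1:ℤ) • e = (k:ℤ) • e := by
        rw [one_smul]
      have hyl : (x + (k : ℤ) • (1:ℤ) • e) l = x l + k := by
        rw [he, hcoord]; simp
      have hlt : (t₁ l + d - (x l + k)).toNat < m := by omega
      exact ih _ hlt _ (by
        have := hstep k hk1 hk2
        exact this) (by rw [hyl])
  -- direction 2 : every point of C₂ lands in closure of f '' C₁
  have dir2 : ∀ m : ℕ, ∀ x : Fin n → ℤ, x ∈ latCube t₁ d ∪ latCube t₂ d →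
      (x l - (t₁ l + d) + 1).toNat = m → f x ∈ AddSubgroup.closure (f '' latCube t₁ d) := by
    intro m
    induction m using Nat.strong_induction_on with
    | _ m ih =>
      intro x hx hm
      rcases hx with hx1 | hx2
      · exact AddSubgroup.subset_closure ⟨x, hx1, rfl⟩
      rw [hmem2 x] at hx2
      obtain ⟨hside, hl1, hl2⟩ := hx2
      have hstep : ∀ k : ℕ, 1 ≤ k → k ≤ d →
          x + (k : ℤ) • (-1:ℤ) • e ∈ latCube t₁ d ∪ latCube t₂ d := by
        intro k hk1 hk2
        have he : (k : ℤ) • (-1:ℤ) • e = (-(k:ℤ)) • e := by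
          rw [smul_smul]; ring_nf
        rw [he]
        set y := x + (-(k:ℤ)) • e with hy
        have hyc : ∀ i, y i = x i + (if i = l then (-(k:ℤ)) else 0) := fun i => hcoord _ x i
        have hk2' : (k:ℤ) ≤ (d:ℤ) := by exact_mod_cast hk2
        by_cases hcase : y l < t₁ l + d
        · left
          rw [hmem1]
          refine ⟨fun i hi => ?_, ?_⟩
          · rw [hyc i]; simp [hi]; exact hside i hi
          · rw [hyc l] at hcase ⊢; simp at hcase ⊢
            refine ⟨by linarith, hcase⟩
        · right
          rw [hmem2]
          refine ⟨fun i hi => ?_, ?_⟩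
          · rw [hyc i]; simp [hi]; exact hside i hi
          · rw [hyc l] at hcase ⊢; simp at hcase ⊢
            have hk0 : (1:ℤ) ≤ (k:ℤ) := by exact_mod_cast hk1
            exact ⟨hcase, by linarith⟩
      have hmem : x ∈ latCube t₁ d ∪ latCube t₂ d := by
        right; rw [hmem2]; exact ⟨hside, hl1, hl2⟩
      have hcl := hf x (-1) (Or.inr rfl) hmem hstep
      refine AddSubgroup.closure_le _ |>.mpr ?_ hcl
      rintro w ⟨k, hk1, hk2, rfl⟩
      have hyl : (x + (k : ℤ) • (-1:ℤ) • e) l = x l - k := by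
        have he : (k : ℤ) • (-1:ℤ) • e = (-(k:ℤ)) • e := by
          rw [smul_smul]; ring_nf
        rw [he, hcoord]; simp; ring
      have hlt : (x l - k - (t₁ l + d) + 1).toNat < m := by omega
      exact ih _ hlt _ (hstep k hk1 hk2) (by rw [hyl])
  -- conclude
  apply le_antisymm
  · rw [AddSubgroup.closure_le]
    rintro w ⟨x, hx, rfl⟩
    exact dir1 _ x (Or.inl hx) rfl
  · rw [AddSubgroup.closure_le]
    rintro w ⟨x, hx, rfl⟩
    exact dir2 _ x (Or.inr hx) rfl
end

section
/- Let R ∈ ℤ[A^{±1}][X₁,...,Xₙ] be a Laurent-polynomial-coefficient polynomial, and let ℱ ⊆ ℂ be the set of all complex roots of all nonzero Laurent polynomials of the form R(A, A^{c₁},...,A^{cₙ}) with c₁,...,cₙ ∈ ℤ. Then there exists C > 0 such that every ζ ∈ ℱ satisfies |ζ| ≤ C. -/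
/-!
Substituting monomials `T ^ cᵢ` for the variables only shifts exponents, so the ℓ¹-norm of the
coefficients of `R(A, A^c₁, …, A^cₙ)` is at most `∑ₘ ‖Rₘ‖₁`, uniformly in `c`. For a nonzero
integer Laurent polynomial `f` with top exponent `d`, a root `ζ` with `‖ζ‖ > 1` satisfies
`‖ζ‖ ^ d ≤ |a_d| ‖ζ‖ ^ d ≤ ∑_{e < d} |a_e| ‖ζ‖ ^ e ≤ ‖f‖₁ ‖ζ‖ ^ (d - 1)`, hence `‖ζ‖ ≤ ‖f‖₁`.
-/

open Finset

namespace LaurentPolynomial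

section l1Norm

variable {R : Type*} [SeminormedRing R]

noncomputable def l1Norm (f : R[T;T⁻¹]) : ℝ := ∑ e ∈ f.coeff.support, ‖f.coeff e‖

lemma l1Norm_eq_sum_of_support_subset (f : R[T;T⁻¹]) {s : Finset ℤ} (h : f.coeff.support ⊆ s) :
    l1Norm f = ∑ e ∈ s, ‖f.coeff e‖ :=
  sum_subset h fun e _ he => by simp [Finsupp.notMem_support_iff.mp he]

@[simp]
lemma l1Norm_zero : l1Norm (0 : R[T;T⁻¹]) = 0 := by
  simp [l1Norm]

lemma l1Norm_add_le (f g : R[T;T⁻¹]) : l1Norm (f + g) ≤ l1Norm f + l1Norm g := by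
  classical
  rw [l1Norm_eq_sum_of_support_subset (f + g) (Finsupp.support_add (g₁ := f.coeff)),
    l1Norm_eq_sum_of_support_subset f subset_union_left,
    l1Norm_eq_sum_of_support_subset g subset_union_right, ← sum_add_distrib]
  exact sum_le_sum fun e _ => norm_add_le _ _

lemma l1Norm_sum_le {ι : Type*} (s : Finset ι) (f : ι → R[T;T⁻¹]) :
    l1Norm (∑ i ∈ s, f i) ≤ ∑ i ∈ s, l1Norm (f i) :=
  le_sum_of_subadditive l1Norm l1Norm_zero.le l1Norm_add_le s f

@[simp]
lemma l1Norm_mul_T (f : R[T;T⁻¹]) (k : ℤ) : l1Norm (f * T k) = l1Norm f := by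
  rw [l1Norm, T, AddMonoidAlgebra.support_coeff_mul_single _ _ (fun y => by rw [mul_one]), sum_map]
  refine sum_congr rfl fun e _ => ?_
  rw [AddMonoidAlgebra.coeff_mul_single_apply, addRightEmbedding_apply, add_neg_cancel_right,
    mul_one]

end l1Norm

lemma l1Norm_eval_T_le {R σ : Type*} [SeminormedCommRing R]
    (P : MvPolynomial σ R[T;T⁻¹]) (c : σ → ℤ) :
    l1Norm (MvPolynomial.eval (fun i => T (c i)) P) ≤ ∑ m ∈ P.support, l1Norm (P.coeff m) := by
  rw [MvPolynomial.eval_eq]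
  refine (l1Norm_sum_le _ _).trans (sum_le_sum fun m _ => ?_)
  obtain ⟨k, hk⟩ : ∃ k, ∏ i ∈ m.support, (T (c i) : R[T;T⁻¹]) ^ m i = T k :=
    prod_induction _ (fun g => ∃ k, g = T k)
      (fun _ _ ⟨a, ha⟩ ⟨b, hb⟩ => ⟨a + b, by rw [ha, hb, T_add]⟩) ⟨0, T_zero.symm⟩
      fun i _ => ⟨_, T_pow _ _⟩
  rw [hk, l1Norm_mul_T]

lemma norm_le_max_one_l1Norm_of_root {f : ℤ[T;T⁻¹]} (hf : f ≠ 0) {ζ : ℂ}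
    (hζ : ∑ e ∈ f.coeff.support, (f.coeff e : ℂ) * ζ ^ e = 0) : ‖ζ‖ ≤ max 1 (l1Norm f) := by
  rw [le_max_iff, or_iff_not_imp_left, not_le]
  intro hζ1
  set s := f.coeff.support
  have hs : s.Nonempty :=
    Finsupp.support_nonempty_iff.mpr (AddMonoidAlgebra.coeff_eq_zero.not.mpr hf)
  set d := s.max' hs
  have hd : d ∈ s := s.max'_mem hs
  have hlead : 1 ≤ ‖f.coeff d‖ := by
    rw [Int.norm_eq_abs, ← Int.cast_abs]
    exact_mod_cast Int.one_le_abs (Finsupp.mem_support_iff.mp hd)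
  have htop : (f.coeff d : ℂ) * ζ ^ d = -∑ e ∈ s.erase d, (f.coeff e : ℂ) * ζ ^ e := by
    rw [← add_sum_erase _ _ hd] at hζ
    linear_combination hζ
  have hlow : ∀ e ∈ s.erase d, ‖ζ‖ ^ e ≤ ‖ζ‖ ^ (d - 1) := fun e he =>
    zpow_le_zpow_right₀ hζ1.le <| Int.le_sub_one_of_lt <|
      (s.le_max' e (mem_of_mem_erase he)).lt_of_ne (ne_of_mem_erase he)
  have key : ‖ζ‖ ^ (d - 1) * ‖ζ‖ ≤ ‖ζ‖ ^ (d - 1) * l1Norm f := calc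
    ‖ζ‖ ^ (d - 1) * ‖ζ‖ = ‖ζ‖ ^ d := by rw [← zpow_add_one₀ (by positivity), sub_add_cancel]
    _ ≤ ‖f.coeff d‖ * ‖ζ‖ ^ d := le_mul_of_one_le_left (by positivity) hlead
    _ = ‖(f.coeff d : ℂ) * ζ ^ d‖ := by
      rw [norm_mul, norm_zpow, Complex.norm_intCast, Int.norm_eq_abs]
    _ = ‖∑ e ∈ s.erase d, (f.coeff e : ℂ) * ζ ^ e‖ := by rw [htop, norm_neg]
    _ ≤ ∑ e ∈ s.erase d, ‖f.coeff e‖ * ‖ζ‖ ^ (d - 1) := norm_sum_le_of_le _ fun e he => by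
      rw [norm_mul, norm_zpow, Complex.norm_intCast, ← Int.norm_eq_abs]
      exact mul_le_mul_of_nonneg_left (hlow e he) (norm_nonneg _)
    _ = ‖ζ‖ ^ (d - 1) * ∑ e ∈ s.erase d, ‖f.coeff e‖ := by rw [← sum_mul, mul_comm]
    _ ≤ ‖ζ‖ ^ (d - 1) * l1Norm f := by
      gcongr
      exact sum_le_sum_of_subset_of_nonneg (erase_subset _ _) fun _ _ _ => norm_nonneg _
  exact le_of_mul_le_mul_left key (by positivity)

end LaurentPolynomial

open LaurentPolynomial

theorem stmt6 (n : ℕ) (R : MvPolynomial (Fin n) (LaurentPolynomial ℤ)) :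
    ∃ C : ℝ, 0 < C ∧ ∀ ζ : ℂ, ζ ≠ 0 →
      (∃ c : Fin n → ℤ,
        MvPolynomial.eval (fun i => LaurentPolynomial.T (c i)) R ≠ 0 ∧
        ∑ e ∈ (MvPolynomial.eval (fun i => LaurentPolynomial.T (c i)) R).coeff.support,
          ((MvPolynomial.eval (fun i => LaurentPolynomial.T (c i)) R).coeff e : ℂ) * ζ ^ e = 0) →
      ‖ζ‖ ≤ C := by
  refine ⟨max 1 (∑ m ∈ R.support, l1Norm (R.coeff m)), lt_max_of_lt_left one_pos, ?_⟩
  rintro ζ - ⟨c, hf, hroot⟩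
  exact (norm_le_max_one_l1Norm_of_root hf hroot).trans (max_le_max_left 1 (l1Norm_eval_T_le R c))
end

section
/- Let Shifts : Monomials → Finset(ℤ^ℰ) assign to each operator its set of shifts, with a map f : ℤ^ℰ → ℤ^k into a lexicographically ordered ℤ^k and minimal shifts defined as shifts x minimizing f(x). Suppose M₁ and M₂ are operators whose shift sets combine additively (every shift of M₁M₂ is a sum x₁+x₂ of shifts, with coefficient given by the product of coefficients summed over all decompositions), and suppose that f(x) ≤ 0 for every minimal shift x of M₁ or M₂. If M₁ has a unique minimal shift, then the minimal shifts of M₁M₂ are exactly the sums y₁+y₂ of minimal shifts y₁ of M₁ and y₂ of M₂, and each such sum arises from a unique decomposition. -/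
/-- `x` is a minimal shift of the operator `M` with respect to `f`, with `ℤ^k`
lexicographically ordered: `x` is a shift (i.e. lies in the support of `M`) and
`f x` is lexicographically minimal among `f` of all shifts of `M`. -/
def IsMinShift {E : Type} {k : ℕ} {R : Type} [CommRing R]
    (f : (E → ℤ) →+ (Fin k → ℤ)) (M : AddMonoidAlgebra R (E → ℤ)) (x : E → ℤ) : Prop :=
  x ∈ M.coeff.support ∧ ∀ y ∈ M.coeff.support, toLex (f x) ≤ toLex (f y)

/-!
Shifts add under multiplication and `x ↦ toLex (f x)` is additive, so every shift of `M₁ * M₂`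
has weight at least that of `y₁ + y₂` for any minimal shift `y₂` of `M₂`. Since `y₁` is the only
minimal shift of `M₁`, `y₁ + y₂` has no other decomposition into shifts of `M₁` and `M₂`, so
its coefficient in `M₁ * M₂` is the product of two nonzero coefficients and the bound is attained.
Conversely, both summands of a decomposition of a minimal shift of `M₁ * M₂` must be minimal.
-/

section PartialOrder

variable {A Γ : Type*} [AddCancelCommMonoid A] [AddCommMonoid Γ] [PartialOrder Γ]
  [IsOrderedCancelAddMonoid Γ] (w : A →+ Γ) {a b x₁ x₂ : A}

theorem isMinOn_and_isMinOn_of_map_add_le {s t : Set A} (ha : IsMinOn w s a)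
    (hb : IsMinOn w t b) (hx₁ : x₁ ∈ s) (hx₂ : x₂ ∈ t) (h : w (x₁ + x₂) ≤ w (a + b)) :
    IsMinOn w s x₁ ∧ IsMinOn w t x₂ := by
  have ha₁ : w a ≤ w x₁ := isMinOn_iff.1 ha x₁ hx₁
  have hb₂ : w b ≤ w x₂ := isMinOn_iff.1 hb x₂ hx₂
  rw [map_add, map_add] at h
  obtain ⟨h₁, h₂⟩ := (add_eq_add_iff_eq_and_eq ha₁ hb₂).1 (le_antisymm (add_le_add ha₁ hb₂) h)
  exact ⟨isMinOn_iff.2 fun y hy => h₁ ▸ isMinOn_iff.1 ha y hy,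
    isMinOn_iff.2 fun y hy => h₂ ▸ isMinOn_iff.1 hb y hy⟩

theorem uniqueAdd_of_isMinOn {s t : Finset A} (ha : IsMinOn w s a) (hb : IsMinOn w t b)
    (huniq : ∀ x ∈ s, IsMinOn w s x → x = a) : UniqueAdd s t a b := by
  intro x₁ x₂ hx₁ hx₂ h
  obtain rfl : x₁ = a :=
    huniq x₁ hx₁ (isMinOn_and_isMinOn_of_map_add_le w ha hb hx₁ hx₂ (congrArg w h).le).1
  exact ⟨rfl, add_left_cancel h⟩

namespace AddMonoidAlgebra

variable {R : Type*} [Semiring R] {M₁ M₂ : AddMonoidAlgebra R A}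

theorem exists_add_eq_of_mem_support_mul {x : A} (hx : x ∈ (M₁ * M₂).coeff.support) :
    ∃ x₁ ∈ M₁.coeff.support, ∃ x₂ ∈ M₂.coeff.support, x₁ + x₂ = x := by
  classical
  exact Finset.mem_add.1 (support_coeff_mul_subset M₁ M₂ hx)

theorem isMinOn_support_mul (ha : IsMinOn w M₁.coeff.support a)
    (hb : IsMinOn w M₂.coeff.support b) : IsMinOn w (M₁ * M₂).coeff.support (a + b) := by
  refine isMinOn_iff.2 fun x hx => ?_
  obtain ⟨x₁, hx₁, x₂, hx₂, rfl⟩ := exists_add_eq_of_mem_support_mul hx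
  rw [map_add, map_add]
  exact add_le_add (isMinOn_iff.1 ha x₁ hx₁) (isMinOn_iff.1 hb x₂ hx₂)

theorem add_mem_support_mul [NoZeroDivisors R] (ha : a ∈ M₁.coeff.support)
    (hb : b ∈ M₂.coeff.support) (h : UniqueAdd M₁.coeff.support M₂.coeff.support a b) :
    a + b ∈ (M₁ * M₂).coeff.support := by
  rw [Finsupp.mem_support_iff, coeff_mul_add_of_uniqueAdd h]
  exact mul_ne_zero (Finsupp.mem_support_iff.1 ha) (Finsupp.mem_support_iff.1 hb)

end AddMonoidAlgebra

end PartialOrder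

namespace AddMonoidAlgebra

variable {A Γ R : Type*} [AddCancelCommMonoid A] [AddCommMonoid Γ] [LinearOrder Γ]
  [IsOrderedCancelAddMonoid Γ] [Semiring R] [NoZeroDivisors R] (w : A →+ Γ)
  {M₁ M₂ : AddMonoidAlgebra R A} {a : A}

theorem isMinOn_support_mul_iff (ha : a ∈ M₁.coeff.support) (ha' : IsMinOn w M₁.coeff.support a)
    (huniq : ∀ x ∈ M₁.coeff.support, IsMinOn w M₁.coeff.support x → x = a) (x : A) :
    x ∈ (M₁ * M₂).coeff.support ∧ IsMinOn w (M₁ * M₂).coeff.support x ↔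
      ∃ b, (b ∈ M₂.coeff.support ∧ IsMinOn w M₂.coeff.support b) ∧ x = a + b := by
  constructor
  · rintro ⟨hx, hxmin⟩
    obtain ⟨x₁, hx₁, x₂, hx₂, rfl⟩ := exists_add_eq_of_mem_support_mul hx
    obtain ⟨b, hb, hbmin⟩ := M₂.coeff.support.exists_min_image w ⟨x₂, hx₂⟩
    have hbmin : IsMinOn w M₂.coeff.support b := isMinOn_iff.2 hbmin
    have hab : a + b ∈ (M₁ * M₂).coeff.support :=
      add_mem_support_mul ha hb (uniqueAdd_of_isMinOn w ha' hbmin huniq)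
    obtain ⟨hx₁min, hx₂min⟩ :=
      isMinOn_and_isMinOn_of_map_add_le w ha' hbmin hx₁ hx₂ (isMinOn_iff.1 hxmin _ hab)
    exact ⟨x₂, ⟨hx₂, hx₂min⟩, by rw [huniq x₁ hx₁ hx₁min]⟩
  · rintro ⟨b, ⟨hb, hbmin⟩, rfl⟩
    exact ⟨add_mem_support_mul ha hb (uniqueAdd_of_isMinOn w ha' hbmin huniq),
      isMinOn_support_mul w ha' hbmin⟩

end AddMonoidAlgebra

theorem isMinShift_iff {E : Type} {k : ℕ} {R : Type} [CommRing R]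
    (f : (E → ℤ) →+ (Fin k → ℤ)) (M : AddMonoidAlgebra R (E → ℤ)) (x : E → ℤ) :
    IsMinShift f M x ↔ x ∈ M.coeff.support ∧
      IsMinOn ((toLexAddEquiv (Fin k → ℤ)).toAddMonoidHom.comp f) M.coeff.support x :=
  and_congr_right fun _ => isMinOn_iff.symm

theorem stmt11_general {E : Type} {k : ℕ} {R : Type} [CommRing R] [IsDomain R]
    (f : (E → ℤ) →+ (Fin k → ℤ))
    (M₁ M₂ : AddMonoidAlgebra R (E → ℤ))
    (y₁ : E → ℤ) (hy₁ : IsMinShift f M₁ y₁)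
    (huniq : ∀ x, IsMinShift f M₁ x → x = y₁) :
    (∀ x, IsMinShift f (M₁ * M₂) x ↔ ∃ y₂, IsMinShift f M₂ y₂ ∧ x = y₁ + y₂) ∧
    (∀ y₂, IsMinShift f M₂ y₂ →
      ∀ x₁ ∈ M₁.coeff.support, ∀ x₂ ∈ M₂.coeff.support,
        x₁ + x₂ = y₁ + y₂ → x₁ = y₁ ∧ x₂ = y₂) := by
  simp only [isMinShift_iff] at hy₁ huniq ⊢
  have huniq' := fun x hx hxmin => huniq x ⟨hx, hxmin⟩
  exact ⟨AddMonoidAlgebra.isMinOn_support_mul_iff _ hy₁.1 hy₁.2 huniq',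
    fun y₂ hy₂ _ hx₁ _ hx₂ h => uniqueAdd_of_isMinOn _ hy₁.2 hy₂.2 huniq' hx₁ hx₂ h⟩

theorem stmt11 {E : Type} {k : ℕ} {R : Type} [CommRing R] [IsDomain R]
    (f : (E → ℤ) →+ (Fin k → ℤ))
    (M₁ M₂ : AddMonoidAlgebra R (E → ℤ))
    (hneg : ∀ x, (IsMinShift f M₁ x ∨ IsMinShift f M₂ x) →
      toLex (f x) ≤ toLex (0 : Fin k → ℤ))
    (y₁ : E → ℤ) (hy₁ : IsMinShift f M₁ y₁)
    (huniq : ∀ x, IsMinShift f M₁ x → x = y₁) :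
    (∀ x, IsMinShift f (M₁ * M₂) x ↔ ∃ y₂, IsMinShift f M₂ y₂ ∧ x = y₁ + y₂) ∧
    (∀ y₂, IsMinShift f M₂ y₂ →
      ∀ x₁ ∈ M₁.coeff.support, ∀ x₂ ∈ M₂.coeff.support,
        x₁ + x₂ = y₁ + y₂ → x₁ = y₁ ∧ x₂ = y₂) :=
  stmt11_general f M₁ M₂ y₁ hy₁ huniq
end

section
/- Let V' ⊆ ℚⁿ be a convex set, d ≥ 1, and partition ℚⁿ into half-open cubes x₀ + dt + [0,d)ⁿ for t ∈ ℤⁿ, where x₀ ∈ ℤⁿ ∩ V'. For any y ∈ ℤⁿ ∩ V', there exists a finite sequence of cubes C₁,...,C_k of the partition with C₁ = x₀ + [0,d)ⁿ, y ∈ C_k, consecutive cubes sharing a face (i.e. their translation vectors differ by d times a standard basis vector), and the segment [x₀, y] covered by ⋃ᵢ Cᵢ. -/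
/-!
Cubes are identified with their translation vectors `t ∈ ℤⁿ`, and face-adjacency makes `ℤⁿ` a
connected graph. The cube containing `z` has index `⌊(z - x₀) / d⌋`, taken coordinatewise, which is
monotone in each coordinate; hence every point of the segment `[x₀, y]` lies in a cube whose index
is in the finite box between `0` and the index of `y`. A walk from `0` to the index of `y` through
every vertex of that box therefore covers the segment.
-/

/-- The half-open cube `x₀ + d·t + [0,d)ⁿ` in `ℚⁿ`, for `x₀, t ∈ ℤⁿ`. -/
def qcube (n d : ℕ) (x₀ t : Fin n → ℤ) : Set (Fin n → ℚ) :=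
  {z | ∀ i, ((x₀ i : ℚ) + d * t i) ≤ z i ∧ z i < (x₀ i : ℚ) + d * t i + d}

open SimpleGraph Set

theorem SimpleGraph.Preconnected.exists_walk_forall_mem_support {V : Type*} {G : SimpleGraph V}
    (hG : G.Preconnected) (W : Finset V) (a b : V) :
    ∃ p : G.Walk a b, ∀ w ∈ W, w ∈ p.support := by
  classical
  induction W using Finset.induction_on generalizing a with
  | empty => exact ⟨(hG a b).some, by simp⟩
  | insert w W _ ih =>
    obtain ⟨q, hq⟩ := ih w
    refine ⟨(hG a w).some.append q, ?_⟩
    simp only [Finset.mem_insert, forall_eq_or_imp, Walk.mem_support_append_iff]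
    exact ⟨Or.inr q.start_mem_support, fun v hv => Or.inr (hq v hv)⟩

def faceGraph (n : ℕ) : SimpleGraph (Fin n → ℤ) where
  Adj a b := ∃ (l : Fin n) (ε : ℤ), (ε = 1 ∨ ε = -1) ∧ b = a + ε • Pi.single l 1
  symm := ⟨by
    rintro a _ ⟨l, ε, hε, rfl⟩
    exact ⟨l, -ε, by omega, by simp⟩⟩
  loopless := ⟨by
    rintro a ⟨l, ε, hε, h⟩
    rcases hε with rfl | rfl <;> simpa using congrFun h l⟩

theorem faceGraph_adj_add_single (n : ℕ) (a : Fin n → ℤ) (l : Fin n) (k : ℤ) :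
    (faceGraph n).Adj (a + Pi.single l k) (a + Pi.single l (k + 1)) :=
  ⟨l, 1, Or.inl rfl, by rw [Pi.single_add]; simp [add_assoc]⟩

theorem faceGraph_reachable_add_single (n : ℕ) (a : Fin n → ℤ) (l : Fin n) (k : ℤ) :
    (faceGraph n).Reachable a (a + Pi.single l k) := by
  induction k using Int.induction_on with
  | zero => simp
  | succ k ih => exact ih.trans (faceGraph_adj_add_single n a l k).reachable
  | pred k ih =>
    have hadj := faceGraph_adj_add_single n a l (-k - 1)
    rw [sub_add_cancel] at hadj
    exact ih.trans hadj.reachable.symm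

theorem faceGraph_preconnected (n : ℕ) : (faceGraph n).Preconnected := by
  intro a b
  suffices ∀ s : Finset (Fin n),
      (faceGraph n).Reachable a (a + ∑ l ∈ s, Pi.single l ((b - a) l)) by
    have := this Finset.univ
    rwa [Finset.univ_sum_single, add_sub_cancel] at this
  intro s
  classical
  induction s using Finset.induction_on with
  | empty => simp
  | insert l s hl ih =>
    rw [Finset.sum_insert hl, add_comm (Pi.single _ _), ← add_assoc]
    exact ih.trans (faceGraph_reachable_add_single n _ l _)

def cubeIndex {n : ℕ} (d : ℕ) (x₀ : Fin n → ℤ) (z : Fin n → ℚ) : Fin n → ℤ :=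
  fun i => ⌊(z i - x₀ i) / d⌋

section cubeIndex

variable {n d : ℕ} (x₀ : Fin n → ℤ)

theorem mem_qcube_cubeIndex (hd : 0 < d) (z : Fin n → ℚ) :
    z ∈ qcube n d x₀ (cubeIndex d x₀ z) := by
  have hd' : (0 : ℚ) < d := by exact_mod_cast hd
  intro i
  have hle := (le_div_iff₀ hd').mp (Int.floor_le ((z i - x₀ i) / d))
  have hlt := (div_lt_iff₀ hd').mp (Int.lt_floor_add_one ((z i - x₀ i) / d))
  constructor <;> simp only [cubeIndex] <;> linarith

@[simp]
theorem cubeIndex_intCast : cubeIndex d x₀ (fun i => (x₀ i : ℚ)) = 0 := by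
  ext i
  simp [cubeIndex]

theorem cubeIndex_mapsTo_segment (y : Fin n → ℚ) :
    MapsTo (cubeIndex d x₀) (segment ℚ (fun i => (x₀ i : ℚ)) y) (uIcc 0 (cubeIndex d x₀ y)) := by
  intro z hz
  rw [← pi_univ_uIcc]
  intro i _
  have hzi : z i ∈ uIcc (x₀ i : ℚ) (y i) :=
    segment_subset_uIcc _ _ (Pi.segment_subset (s := univ) _ _ hz i trivial)
  have hmono : Monotone fun q : ℚ => ⌊(q - x₀ i) / d⌋ := fun q r hqr =>
    Int.floor_le_floor (div_le_div_of_nonneg_right (sub_le_sub_right hqr _) d.cast_nonneg)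
  simpa [cubeIndex] using hmono.mapsTo_uIcc hzi

end cubeIndex

theorem stmt16_general (n d : ℕ) (hd : 1 ≤ d)
    (x₀ y : Fin n → ℤ) :
    ∃ (k : ℕ) (t : Fin (k + 1) → (Fin n → ℤ)),
      t 0 = 0 ∧
      (fun i => (y i : ℚ)) ∈ qcube n d x₀ (t (Fin.last k)) ∧
      (∀ j : Fin k, ∃ (l : Fin n) (ε : ℤ), (ε = 1 ∨ ε = -1) ∧
        t j.succ = t j.castSucc + ε • Pi.single l 1) ∧
      segment ℚ (fun i => (x₀ i : ℚ)) (fun i => (y i : ℚ)) ⊆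
        ⋃ j : Fin (k + 1), qcube n d x₀ (t j) := by
  set m := cubeIndex d x₀ (fun i => (y i : ℚ))
  obtain ⟨p, hp⟩ :=
    (faceGraph_preconnected n).exists_walk_forall_mem_support (Finset.uIcc 0 m) 0 m
  refine ⟨p.length, fun j => p.getVert j, p.getVert_zero, ?_, fun j => p.adj_getVert_succ j.2, ?_⟩
  · simpa [p.getVert_length] using mem_qcube_cubeIndex x₀ hd _
  · intro z hz
    have hbox : cubeIndex d x₀ z ∈ Finset.uIcc 0 m := by
      simpa [← Finset.coe_uIcc] using cubeIndex_mapsTo_segment x₀ _ hz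
    obtain ⟨j, hj, hjle⟩ := Walk.mem_support_iff_exists_getVert.mp (hp _ hbox)
    exact mem_iUnion.mpr ⟨⟨j, by omega⟩, hj ▸ mem_qcube_cubeIndex x₀ hd z⟩

theorem stmt16 (n d : ℕ) (hd : 1 ≤ d)
    (V' : Set (Fin n → ℚ)) (hconv : Convex ℚ V')
    (x₀ y : Fin n → ℤ)
    (hx₀ : (fun i => (x₀ i : ℚ)) ∈ V') (hy : (fun i => (y i : ℚ)) ∈ V') :
    ∃ (k : ℕ) (t : Fin (k + 1) → (Fin n → ℤ)),
      t 0 = 0 ∧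
      (fun i => (y i : ℚ)) ∈ qcube n d x₀ (t (Fin.last k)) ∧
      (∀ j : Fin k, ∃ (l : Fin n) (ε : ℤ), (ε = 1 ∨ ε = -1) ∧
        t j.succ = t j.castSucc + ε • Pi.single l 1) ∧
      segment ℚ (fun i => (x₀ i : ℚ)) (fun i => (y i : ℚ)) ⊆
        ⋃ j : Fin (k + 1), qcube n d x₀ (t j) :=
  stmt16_general n d hd x₀ y
end
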